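/- arXiv:1408.2880 — 10 statements merged into one kernel-verified Lean document; each statement's English description precedes it below -/
import Mathlib

section
/- Let k ≥ 3 be an integer, let 0 < a < 1, and set δ_k(a) = a^{(k−1)/(k−2)}. If x ∈ (0,1] and there is an integer r ≥ 2 such that x·r^j ∈ (a, 1] for all j ∈ {1, ..., k−1}, then x > δ_k(a). -/
theorem stmt_4 (k : ℕ) (hk : 3 ≤ k) (a : ℝ) (ha : 0 < a) (ha1 : a < 1)
    (x : ℝ) (hx : x ∈ Set.Ioc (0 : ℝ) 1) (r : ℕ) (hr : 2 ≤ r)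
    (h : ∀ j : ℕ, 1 ≤ j → j ≤ k - 1 → x * (r : ℝ) ^ j ∈ Set.Ioc a 1) :
    x > a ^ (((k : ℝ) - 1) / ((k : ℝ) - 2)) := by
  obtain ⟨hx0, hx1⟩ := hx
  set n : ℕ := k - 1 with hn
  have hn2 : 2 ≤ n := by omega
  have hN : (n : ℝ) = (k : ℝ) - 1 := by
    rw [hn, Nat.cast_sub (by omega : 1 ≤ k)]; norm_num
  have hN2 : (2 : ℝ) ≤ (n : ℝ) := by exact_mod_cast hn2
  have hNpos : (0 : ℝ) < (n : ℝ) := by linarith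
  have h1 := (h 1 le_rfl (by omega)).1
  rw [pow_one] at h1
  have hn' := (h n (by omega) le_rfl).2
  have hr0 : (0 : ℝ) < (r : ℝ) := by positivity
  -- r^n ≤ 1/x
  have h2 : (r : ℝ) ^ (n : ℝ) ≤ 1 / x := by
    rw [Real.rpow_natCast, le_div_iff₀ hx0]
    linarith [hn']
  -- r ≤ x^(-(1/n))
  have hrle : (r : ℝ) ≤ x ^ (-(1 / (n : ℝ))) := by
    have key := Real.rpow_le_rpow (by positivity) h2
      (le_of_lt (by positivity : (0 : ℝ) < 1 / (n : ℝ)))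
    rwa [← Real.rpow_mul hr0.le, mul_one_div_cancel (ne_of_gt hNpos),
      Real.rpow_one, one_div x, Real.inv_rpow hx0.le, ← Real.rpow_neg hx0.le] at key
  set p : ℝ := 1 - 1 / (n : ℝ) with hp
  have hppos : 0 < p := by
    have : 1 / (n : ℝ) ≤ 1 / 2 := by
      apply one_div_le_one_div_of_le <;> linarith
    rw [hp]; linarith
  have hkey : a < x ^ p := by
    have hxr : x * x ^ (-(1 / (n : ℝ))) = x ^ p := by
      rw [hp, sub_eq_add_neg, Real.rpow_add hx0, Real.rpow_one]
    calc a < x * (r : ℝ) := h1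
      _ ≤ x * x ^ (-(1 / (n : ℝ))) := by
          apply mul_le_mul_of_nonneg_left hrle hx0.le
      _ = x ^ p := hxr
  have hfinal := Real.rpow_lt_rpow ha.le hkey (by positivity : (0 : ℝ) < 1 / p)
  rw [← Real.rpow_mul hx0.le, mul_one_div_cancel (ne_of_gt hppos),
    Real.rpow_one] at hfinal
  have hexp : 1 / p = ((k : ℝ) - 1) / ((k : ℝ) - 2) := by
    rw [hp]
    have h1 : (k : ℝ) - 1 = (n : ℝ) := hN.symm
    have h2 : (k : ℝ) - 2 = (n : ℝ) - 1 := by linarith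
    rw [h1, h2]
    field_simp
  rwa [hexp] at hfinal
end

section
/- Let k ≥ 3 be an integer, let 0 < a < 1 and δ_k(a) = a^{(k−1)/(k−2)}. If G is a k-good set with G ⊆ (a, 1], then (0, δ_k(a)] ∩ Bad(G) = ∅; that is, no x ∈ (0, δ_k(a)] is k-bad with respect to G. -/
/-- A set `G` of reals is `k`-good if it contains no geometric progression of
length `k` with integer ratio. -/
def kGood (k : ℕ) (G : Set ℝ) : Prop :=
  ¬ ∃ (a : ℝ) (r : ℕ), 0 < a ∧ 2 ≤ r ∧ ∀ j < k, a * (r : ℝ) ^ j ∈ G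

/-- `x` is `k`-bad with respect to `G` if there is an integer `r ≥ 2` with
`x * r ^ j ∈ G` for all `j ∈ {1,...,k-1}`. -/
def kBadWrt (k : ℕ) (G : Set ℝ) (x : ℝ) : Prop :=
  ∃ r : ℕ, 2 ≤ r ∧ ∀ j : ℕ, 1 ≤ j → j ≤ k - 1 → x * (r : ℝ) ^ j ∈ G

/-- `Bad k G` is the set of `x ∈ (0,1] \ G` that are `k`-bad with respect to `G`. -/
def Bad (k : ℕ) (G : Set ℝ) : Set ℝ :=
  {x | x ∈ Set.Ioc (0 : ℝ) 1 \ G ∧ kBadWrt k G x}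

theorem stmt_5 (k : ℕ) (hk : 3 ≤ k) (a : ℝ) (ha : 0 < a) (ha1 : a < 1)
    (G : Set ℝ) (hG : kGood k G) (hsub : G ⊆ Set.Ioc a 1) :
    Set.Ioc 0 (a ^ (((k : ℝ) - 1) / ((k : ℝ) - 2))) ∩ Bad k G = ∅ := by
  ext x
  simp only [Set.mem_inter_iff, Set.mem_Ioc, Set.mem_empty_iff_false, iff_false, Bad,
    Set.mem_setOf_eq, Set.mem_diff, kBadWrt]
  rintro ⟨⟨hx0, hxδ⟩, ⟨⟨_, hxG⟩, r, hr2, hbad⟩⟩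
  set n : ℕ := k - 2 with hn
  have hn1 : 1 ≤ n := by omega
  have hnR : ((n : ℕ) : ℝ) = (k : ℝ) - 2 := by
    rw [hn, Nat.cast_sub (by omega : 2 ≤ k)]; norm_num
  have hr0 : (0 : ℝ) < (r : ℝ) := by positivity
  -- memberships
  have h1 : x * (r : ℝ) ^ 1 ∈ G := hbad 1 le_rfl (by omega)
  have h2 : x * (r : ℝ) ^ (k - 1) ∈ G := hbad (k - 1) (by omega) le_rfl
  have ha1' : a < x * r := by have := (hsub h1).1; simpa using this
  have hk1 : k - 1 = n + 1 := by omega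
  have h2' : (x * r) * (r : ℝ) ^ n ≤ 1 := by
    have := (hsub h2).2
    rw [hk1, pow_succ] at this
    nlinarith [this]
  have harn : a * (r : ℝ) ^ n < 1 := by
    have hrn : (0 : ℝ) < (r : ℝ) ^ n := by positivity
    nlinarith
  set c : ℝ := a ^ ((1 : ℝ) / (n : ℝ)) with hc
  have hc0 : 0 < c := Real.rpow_pos_of_pos ha _
  have hcn : c ^ n = a := by
    rw [hc, ← Real.rpow_natCast (a ^ ((1:ℝ)/(n:ℝ))) n, ← Real.rpow_mul ha.le]
    rw [one_div, inv_mul_cancel₀ (by positivity : ((n:ℕ):ℝ) ≠ 0), Real.rpow_one]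
  have hδ : a ^ (((k : ℝ) - 1) / ((k : ℝ) - 2)) = a * c := by
    have hexp : ((k : ℝ) - 1) / ((k : ℝ) - 2) = 1 + 1 / (n : ℝ) := by
      rw [← hnR]
      have : ((n : ℕ) : ℝ) ≠ 0 := by positivity
      field_simp
      rw [hnR]; ring
    rw [hexp, Real.rpow_add ha, Real.rpow_one, hc]
  rw [hδ] at hxδ
  have hcr : 1 < c * r := by
    have : a < a * (c * r) := by nlinarith
    nlinarith
  have : 1 < (c * r) ^ n := one_lt_pow₀ hcr (by omega)
  rw [mul_pow, hcn] at this
  linarith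
end

section
/- Let k ≥ 3 be an integer and let (a_i)_{i=1}^{2n} be a strictly decreasing sequence of positive real numbers with a_1 ≤ 1 such that G_n = ⋃_{i=1}^{n} (a_{2i}, a_{2i−1}] is a k-good set. If x ∈ Bad(G_n), then there exists δ > 0 such that the whole interval (x − δ, x] is contained in Bad(G_n). -/
theorem stmt_6 (k : ℕ) (hk : 3 ≤ k) (n : ℕ) (hn : 0 < n) (a : ℕ → ℝ)
    (hpos : ∀ i, 1 ≤ i → i ≤ 2 * n → 0 < a i)
    (hdec : ∀ i j, 1 ≤ i → i < j → j ≤ 2 * n → a j < a i)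
    (ha1 : a 1 ≤ 1)
    (hgood : kGood k (⋃ i ∈ Finset.Icc 1 n, Set.Ioc (a (2 * i)) (a (2 * i - 1))))
    (x : ℝ)
    (hx : x ∈ Bad k (⋃ i ∈ Finset.Icc 1 n, Set.Ioc (a (2 * i)) (a (2 * i - 1)))) :
    ∃ δ > 0, Set.Ioc (x - δ) x ⊆
      Bad k (⋃ i ∈ Finset.Icc 1 n, Set.Ioc (a (2 * i)) (a (2 * i - 1))) := by
  set G := ⋃ i ∈ Finset.Icc 1 n, Set.Ioc (a (2 * i)) (a (2 * i - 1)) with hG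
  obtain ⟨⟨⟨hx0, hx1⟩, hxG⟩, r, hr2, hrG⟩ := hx
  have hrpos : (0 : ℝ) < (r : ℝ) := by
    have : 0 < r := by omega
    exact_mod_cast this
  -- G is "left-open": every point of G has room below it inside G
  have hleft : ∀ g ∈ G, ∃ ε > 0, ∀ z, g - ε < z → z ≤ g → z ∈ G := by
    intro g hg
    rw [hG, Set.mem_iUnion₂] at hg
    obtain ⟨i, hi, hgi⟩ := hg
    refine ⟨g - a (2 * i), by linarith [hgi.1], ?_⟩
    intro z hz1 hz2
    rw [hG, Set.mem_iUnion₂]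
    exact ⟨i, hi, ⟨by linarith, by linarith [hgi.2]⟩⟩
  have key : ∀ j : ℕ, ∃ ε > 0,
      (1 ≤ j → j ≤ k - 1 → ∀ y, x - ε < y → y ≤ x → y * (r : ℝ) ^ j ∈ G) := by
    intro j
    by_cases hj : 1 ≤ j ∧ j ≤ k - 1
    · obtain ⟨ε, hε, hεG⟩ := hleft _ (hrG j hj.1 hj.2)
      have hpj : (0 : ℝ) < (r : ℝ) ^ j := pow_pos hrpos j
      refine ⟨ε / (r : ℝ) ^ j, by positivity, fun _ _ y hy1 hy2 => ?_⟩
      apply hεG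
      · have h1 : (x - y) * (r : ℝ) ^ j < (ε / (r : ℝ) ^ j) * (r : ℝ) ^ j := by
          apply mul_lt_mul_of_pos_right _ hpj
          linarith
        rw [div_mul_cancel₀ _ (ne_of_gt hpj)] at h1
        nlinarith
      · nlinarith
    · exact ⟨1, one_pos, fun h1 h2 => absurd ⟨h1, h2⟩ hj⟩
  choose ε hεpos hεG using key
  have hne : (Finset.Icc 1 (k - 1)).Nonempty := ⟨1, by simp; omega⟩
  set δ := min x ((Finset.Icc 1 (k - 1)).inf' hne ε) with hδ
  have hδx : δ ≤ x := min_le_left _ _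
  have hδpos : 0 < δ :=
    lt_min hx0 ((Finset.lt_inf'_iff hne).mpr fun j _ => hεpos j)
  refine ⟨δ, hδpos, fun y hy => ?_⟩
  obtain ⟨hy1, hy2⟩ := hy
  have hy0 : 0 < y := by linarith
  have hyG' : ∀ j : ℕ, 1 ≤ j → j ≤ k - 1 → y * (r : ℝ) ^ j ∈ G := by
    intro j h1 h2
    apply hεG j h1 h2 y ?_ hy2
    have hδε : δ ≤ ε j :=
      le_trans (min_le_right _ _) (Finset.inf'_le ε (by simp [Finset.mem_Icc]; omega))
    linarith
  refine ⟨⟨⟨hy0, le_trans hy2 hx1⟩, ?_⟩, r, hr2, hyG'⟩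
  intro hyG
  apply hgood
  refine ⟨y, r, hy0, hr2, ?_⟩
  intro j hj
  rcases Nat.eq_zero_or_pos j with h0 | h1
  · simpa [h0] using hyG
  · exact hyG' j h1 (by omega)
end

section
/- Let k ≥ 3 be an integer and let (a_i)_{i=1}^{2n+1} be a strictly decreasing sequence of positive real numbers with a_1 ≤ 1 such that G_n = ⋃_{i=1}^{n} (a_{2i}, a_{2i−1}] is a k-good set and ⋃_{i=1}^{n} (a_{2i+1}, a_{2i}] ⊆ Bad(G_n). If x ∈ (a_{2n+1}/2, a_{2n+1}] is k-good with respect to G_n, then there exists δ > 0 such that (x − δ, x] ∪ G_n is a k-good set. -/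
theorem stmt_7 (k : ℕ) (hk : 3 ≤ k) (n : ℕ) (hn : 0 < n) (a : ℕ → ℝ)
    (hpos : ∀ i, 1 ≤ i → i ≤ 2 * n + 1 → 0 < a i)
    (hdec : ∀ i j, 1 ≤ i → i < j → j ≤ 2 * n + 1 → a j < a i)
    (ha1 : a 1 ≤ 1)
    (hgood : kGood k (⋃ i ∈ Finset.Icc 1 n, Set.Ioc (a (2 * i)) (a (2 * i - 1))))
    (hbad : (⋃ i ∈ Finset.Icc 1 n, Set.Ioc (a (2 * i + 1)) (a (2 * i))) ⊆
      Bad k (⋃ i ∈ Finset.Icc 1 n, Set.Ioc (a (2 * i)) (a (2 * i - 1))))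
    (x : ℝ) (hx : x ∈ Set.Ioc (a (2 * n + 1) / 2) (a (2 * n + 1)))
    (hxgood : ¬ kBadWrt k (⋃ i ∈ Finset.Icc 1 n, Set.Ioc (a (2 * i)) (a (2 * i - 1))) x) :
    ∃ δ > 0, kGood k (Set.Ioc (x - δ) x ∪
      ⋃ i ∈ Finset.Icc 1 n, Set.Ioc (a (2 * i)) (a (2 * i - 1))) := by
  classical
  set G : Set ℝ := ⋃ i ∈ Finset.Icc 1 n, Set.Ioc (a (2 * i)) (a (2 * i - 1)) with hGdef
  obtain ⟨hx1, hx2⟩ := hx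
  have hA : 0 < a (2 * n + 1) := hpos _ (by omega) (by omega)
  have hxpos : 0 < x := lt_trans (by positivity) hx1
  have hA2 : a (2 * n + 1) < a (2 * n) := hdec _ _ (by omega) (by omega) (by omega)
  have hxle1 : x ≤ 1 := by
    have : a (2 * n + 1) ≤ a 1 := le_of_lt (hdec _ _ (by omega) (by omega) (by omega))
    linarith
  have hGsub : G ⊆ Set.Ioc (a (2 * n)) (a 1) := by
    intro y hy
    simp only [hGdef, Set.mem_iUnion, Finset.mem_Icc] at hy
    obtain ⟨i, ⟨hi1, hi2⟩, hy1, hy2⟩ := hy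
    constructor
    · refine lt_of_le_of_lt ?_ hy1
      rcases eq_or_lt_of_le (show 2 * i ≤ 2 * n by omega) with h | h
      · rw [h]
      · exact le_of_lt (hdec _ _ (by omega) h (by omega))
    · refine le_trans hy2 ?_
      rcases eq_or_lt_of_le (show 1 ≤ 2 * i - 1 by omega) with h | h
      · rw [← h]
      · exact le_of_lt (hdec _ _ le_rfl h (by omega))
  -- margin below a point not in G
  have eloc : ∀ y : ℝ, y ∉ G → ∃ e : ℝ, 0 < e ∧ ∀ z : ℝ, y - e < z → z ≤ y → z ∉ G := by
    intro y hy
    have hne : (Finset.Icc 1 n).Nonempty := ⟨1, by simp [Finset.mem_Icc]; omega⟩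
    refine ⟨(Finset.Icc 1 n).inf' hne (fun i => if a (2 * i - 1) < y then y - a (2 * i - 1) else 1),
      ?_, ?_⟩
    · rw [Finset.lt_inf'_iff]
      intro i _
      split_ifs with h
      · linarith
      · norm_num
    · intro z h1 h2 hz
      simp only [hGdef, Set.mem_iUnion, Finset.mem_Icc] at hz
      obtain ⟨i, hi, hz1, hz2⟩ := hz
      have hle := Finset.inf'_le (fun i => if a (2 * i - 1) < y then y - a (2 * i - 1) else 1)
        (by simpa [Finset.mem_Icc] using hi : i ∈ Finset.Icc 1 n)
      by_cases hc : a (2 * i - 1) < y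
      · rw [if_pos hc] at hle; linarith
      · push_neg at hc
        have : y ∉ Set.Ioc (a (2 * i)) (a (2 * i - 1)) := by
          intro hmem
          exact hy (by simp only [hGdef, Set.mem_iUnion, Finset.mem_Icc]; exact ⟨i, hi, hmem⟩)
        rw [Set.mem_Ioc, not_and_or] at this
        rcases this with h | h
        · push_neg at h; linarith
        · exact h hc
  -- for each ratio, a safe margin
  have hxg : ∀ r : ℕ, 2 ≤ r → ∃ j : ℕ, 1 ≤ j ∧ j ≤ k - 1 ∧ x * (r : ℝ) ^ j ∉ G := by
    intro r hr
    by_contra hcon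
    push_neg at hcon
    exact hxgood ⟨r, hr, fun j hj1 hj2 => hcon j hj1 hj2⟩
  have key : ∀ r : ℕ, ∃ d : ℝ, 0 < d ∧ (2 ≤ r →
      ∃ j : ℕ, 1 ≤ j ∧ j < k ∧ ∀ b : ℝ, x - d < b → b ≤ x → b * (r : ℝ) ^ j ∉ G) := by
    intro r
    by_cases hr : 2 ≤ r
    · obtain ⟨j, hj1, hj2, hjG⟩ := hxg r hr
      obtain ⟨e, he, hE⟩ := eloc _ hjG
      have hrpos : (0 : ℝ) < (r : ℝ) ^ j := by positivity
      refine ⟨e / (r : ℝ) ^ j, by positivity, fun _ => ⟨j, hj1, by omega, ?_⟩⟩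
      intro b hb1 hb2
      refine hE _ ?_ (mul_le_mul_of_nonneg_right hb2 (le_of_lt hrpos))
      have : (x - e / (r : ℝ) ^ j) * (r : ℝ) ^ j < b * (r : ℝ) ^ j :=
        mul_lt_mul_of_pos_right hb1 hrpos
      calc x * (r : ℝ) ^ j - e = (x - e / (r : ℝ) ^ j) * (r : ℝ) ^ j := by
            field_simp
        _ < b * (r : ℝ) ^ j := this
    · exact ⟨1, one_pos, fun h => absurd h hr⟩
  choose d hdpos hd using key
  set R : ℕ := ⌊2 / x⌋₊ with hRdef
  have hR2 : 2 ≤ R := by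
    rw [hRdef]
    refine Nat.le_floor ?_
    rw [Nat.cast_ofNat, le_div_iff₀ hxpos]
    nlinarith
  have hneR : (Finset.Icc 2 R).Nonempty := ⟨2, by simp [Finset.mem_Icc]; omega⟩
  set δ : ℝ := min (x / 2) ((Finset.Icc 2 R).inf' hneR d) with hδdef
  have hδpos : 0 < δ := by
    rw [hδdef, lt_min_iff]
    refine ⟨by linarith, ?_⟩
    rw [Finset.lt_inf'_iff]
    intro i _; exact hdpos i
  have hδx : δ ≤ x / 2 := min_le_left _ _
  have hδr : ∀ r ∈ Finset.Icc 2 R, δ ≤ d r := fun r hr =>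
    le_trans (min_le_right _ _) (Finset.inf'_le _ hr)
  refine ⟨δ, hδpos, ?_⟩
  rintro ⟨b, r, hb, hr2, hmem⟩
  have hr1 : (1 : ℝ) < (r : ℝ) := by exact_mod_cast (by omega : 1 < r)
  have hr2' : (2 : ℝ) ≤ (r : ℝ) := by exact_mod_cast hr2
  -- all later terms lie in G
  have C : ∀ j : ℕ, j < k → 1 ≤ j → b * (r : ℝ) ^ j ∈ G := by
    intro j hjk hj1
    rcases hmem j hjk with h | h
    · exfalso
      obtain ⟨m, rfl⟩ : ∃ m, j = m + 1 := ⟨j - 1, by omega⟩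
      have hpm : (0 : ℝ) < (r : ℝ) ^ m := by positivity
      have hle : b * (r : ℝ) ^ (m + 1) ≤ x := h.2
      have h2 : b * (r : ℝ) ^ m * 2 ≤ b * (r : ℝ) ^ (m + 1) := by
        rw [pow_succ]; nlinarith [mul_pos hb hpm]
      rcases hmem m (by omega) with hm | hm
      · have := hm.1
        linarith
      · have h3 := (hGsub hm).1
        have h4 : b * (r : ℝ) ^ m < b * (r : ℝ) ^ (m + 1) := by
          rw [pow_succ]; nlinarith [mul_pos hb hpm]
        linarith
    · exact h
  rcases hmem 0 (by omega) with h0 | h0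
  · -- b in the new interval
    rw [pow_zero, mul_one] at h0
    have hbr : b * (r : ℝ) ^ 1 ∈ G := C 1 (by omega) le_rfl
    have hbr1 : b * (r : ℝ) ≤ 1 := by
      have := (hGsub hbr).2
      rw [pow_one] at this
      linarith
    have hbhalf : x / 2 < b := by
      have := h0.1; linarith
    have hrR : r ∈ Finset.Icc 2 R := by
      rw [Finset.mem_Icc]
      refine ⟨hr2, Nat.le_floor ?_⟩
      rw [le_div_iff₀ hxpos]
      nlinarith
    obtain ⟨j, hj1, hjk, hnot⟩ := hd r hr2
    exact hnot b (by linarith [hδr r hrR, h0.1]) h0.2 (C j hjk hj1)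
  · -- whole progression in G, contradicting hgood
    refine hgood ⟨b, r, hb, hr2, fun j hj => ?_⟩
    rcases Nat.eq_zero_or_pos j with rfl | hp
    · simpa using h0
    · exact C j hj hp
end

section
/- Let k ≥ 3 be an integer. There exists a unique strictly decreasing sequence (a_i)_{i=1}^{∞} of positive real numbers with a_1 = 1 such that G = ⋃_{i=1}^{∞} (a_{2i}, a_{2i−1}] is a k-good set and Bad(G) = ⋃_{i=1}^{∞} (a_{2i+1}, a_{2i}]. -/
/-!
The sequence is built greedily. If the blocks found so far form a good set `G` lying above
`b = a (2i)`, with `b` not bad, then `a (2i+1)` is the least `t` for which `G ∪ (t, b]` is still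
good, and `a (2i+2)` is the least `t` such that every point of `(t, a (2i+1)]` is bad. These infima
are attained and lie strictly below their right ends because every set in sight is a finite union
of intervals `(u, v]`, whose one-sided germs are constant; near a positive point the set of bad
points of such a union is again one, since only boundedly many ratios can occur. Conversely every
sequence with the stated properties obeys the same recursion, which gives uniqueness. Finally the
sequence tends to `0`: otherwise the bad set of one fixed stage would have to alternate between the
points `a (2n+1)` and `a (2n+2)` arbitrarily close to the limit.
-/

open Set Filter Topology

section Progressions

variable {k : ℕ} {G H : Set ℝ} {x : ℝ}

theorem kGood.mono (hH : kGood k H) (hGH : G ⊆ H) : kGood k G :=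
  fun ⟨a, r, ha, hr, hmem⟩ => hH ⟨a, r, ha, hr, fun j hj => hGH (hmem j hj)⟩

theorem kBadWrt.mono (h : kBadWrt k G x) (hGH : G ⊆ H) : kBadWrt k H x :=
  let ⟨r, hr, hmem⟩ := h
  ⟨r, hr, fun j h₁ h₂ => hGH (hmem j h₁ h₂)⟩

theorem two_le_natCast_pow {r : ℕ} (hr : 2 ≤ r) {j : ℕ} (hj : 1 ≤ j) : (2 : ℝ) ≤ (r : ℝ) ^ j :=
  calc (2 : ℝ) ≤ r := by exact_mod_cast hr
    _ ≤ (r : ℝ) ^ j := le_self_pow₀ (by norm_cast; omega) (by omega)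

theorem not_kGood_iff (hk : 1 ≤ k) : ¬ kGood k G ↔ ∃ a ∈ G, 0 < a ∧ kBadWrt k G a := by
  rw [kGood, not_not]
  constructor
  · rintro ⟨a, r, ha, hr, hmem⟩
    refine ⟨a, by simpa using hmem 0 (by omega), ha, r, hr, fun j _ hj => hmem j (by omega)⟩
  · rintro ⟨a, haG, ha, r, hr, hmem⟩
    refine ⟨a, r, ha, hr, fun j hj => ?_⟩
    rcases j with _ | j
    · simpa using haG
    · exact hmem (j + 1) (by omega) (by omega)

theorem kBadWrt.inter_Ici (h : kBadWrt k G x) (hx : 0 ≤ x) : kBadWrt k (G ∩ Ici (2 * x)) x := by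
  obtain ⟨r, hr, hmem⟩ := h
  refine ⟨r, hr, fun j h₁ h₂ => ⟨hmem j h₁ h₂, ?_⟩⟩
  rw [mem_Ici, mul_comm]
  exact mul_le_mul_of_nonneg_left (two_le_natCast_pow hr h₁) hx

/-- A progression in `G ∪ (t, b]` must start in `(t, b]`, as `G` is good and lies above `b`;
since `2t ≥ b`, its later terms lie in `G`. -/
theorem kGood_union_Ioc_iff (hk : 1 ≤ k) (hG : kGood k G) {b t : ℝ} (hGb : G ⊆ Ioi b)
    (ht : 0 ≤ t) (htb : b ≤ 2 * t) :
    kGood k (G ∪ Ioc t b) ↔ ∀ a ∈ Ioc t b, ¬ kBadWrt k G a := by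
  rw [← not_iff_not, not_kGood_iff hk]
  push Not
  constructor
  · rintro ⟨a, haG, ha, hbad⟩
    have hba : b < 2 * a := by
      rcases haG with haG | haG
      · linarith [mem_Ioi.1 (hGb haG)]
      · linarith [haG.1]
    have hsub : (G ∪ Ioc t b) ∩ Ici (2 * a) ⊆ G := fun y ⟨hy, hya⟩ =>
      hy.resolve_right fun hyI => (hba.trans_le hya).not_ge hyI.2
    have hbadG := (hbad.inter_Ici ha.le).mono hsub
    exact ⟨a, haG.resolve_left fun haG => (not_kGood_iff hk).2 ⟨a, haG, ha, hbadG⟩ hG, hbadG⟩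
  · rintro ⟨a, ha, hbad⟩
    exact ⟨a, Or.inr ha, ht.trans_lt ha.1, hbad.mono subset_union_left⟩

end Progressions

section Tame

/-- Finite unions of intervals `Ioc u v` have constant one-sided germs at every point; this is the
only consequence of finiteness that the construction needs. -/
def IsTame (S : Set ℝ) : Prop :=
  ∀ c, EventuallyConst S (𝓝[≤] c) ∧ EventuallyConst S (𝓝[>] c)

variable {S T : Set ℝ}

theorem isTame_const (p : Prop) : IsTame {_x | p} :=
  fun _ => ⟨.const p, .const p⟩

theorem isTame_Ioi (u : ℝ) : IsTame (Ioi u) := by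
  intro c
  simp only [eventuallyConst_set]
  constructor
  · rcases lt_or_ge u c with huc | hcu
    · exact .inl (nhdsWithin_le_nhds (isOpen_Ioi.mem_nhds huc))
    · exact .inr (eventually_nhdsWithin_of_forall fun x hx => not_lt.2 (le_trans hx hcu))
  · rcases lt_or_ge c u with hcu | huc
    · exact .inr (nhdsWithin_le_nhds ((eventually_lt_nhds hcu).mono fun x hx => not_lt.2 hx.le))
    · exact .inl (eventually_nhdsWithin_of_forall fun x hx => lt_of_le_of_lt huc hx)

theorem isTame_Iic (v : ℝ) : IsTame (Iic v) := by
  intro c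
  simp only [eventuallyConst_set]
  constructor
  · rcases le_or_gt c v with hcv | hvc
    · exact .inl (eventually_nhdsWithin_of_forall fun x hx => le_trans hx hcv)
    · exact .inr (nhdsWithin_le_nhds ((eventually_gt_nhds hvc).mono fun x hx => not_le.2 hx))
  · rcases lt_or_ge c v with hcv | hvc
    · exact .inl (nhdsWithin_le_nhds ((eventually_lt_nhds hcv).mono fun x hx => le_of_lt hx))
    · exact .inr (eventually_nhdsWithin_of_forall fun x hx => not_le.2 (lt_of_le_of_lt hvc hx))

theorem IsTame.union (hS : IsTame S) (hT : IsTame T) : IsTame (S ∪ T) :=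
  fun c => ⟨(hS c).1.comp₂ (· ∨ ·) (hT c).1, (hS c).2.comp₂ (· ∨ ·) (hT c).2⟩

theorem IsTame.inter (hS : IsTame S) (hT : IsTame T) : IsTame (S ∩ T) :=
  fun c => ⟨(hS c).1.comp₂ (· ∧ ·) (hT c).1, (hS c).2.comp₂ (· ∧ ·) (hT c).2⟩

theorem isTame_Ioc (u v : ℝ) : IsTame (Ioc u v) :=
  (isTame_Ioi u).inter (isTame_Iic v)

theorem IsTame.preimage_mul_right (hS : IsTame S) {a : ℝ} (ha : 0 < a) :
    IsTame ((· * a) ⁻¹' S) := by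
  intro c
  have hcont : Tendsto (· * a) (𝓝 c) (𝓝 (c * a)) := (continuous_mul_const a).tendsto c
  refine ⟨(hS (c * a)).1.comp_tendsto ?_, (hS (c * a)).2.comp_tendsto ?_⟩
  · exact tendsto_nhdsWithin_of_tendsto_nhds_of_eventually_within _
      (hcont.mono_left nhdsWithin_le_nhds)
      (eventually_nhdsWithin_of_forall fun x hx => mul_le_mul_of_nonneg_right hx ha.le)
  · exact tendsto_nhdsWithin_of_tendsto_nhds_of_eventually_within _
      (hcont.mono_left nhdsWithin_le_nhds)
      (eventually_nhdsWithin_of_forall fun x hx => mul_lt_mul_of_pos_right hx ha)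

theorem isTame_biUnion {ι : Type*} (s : Finset ι) {f : ι → Set ℝ}
    (h : ∀ i ∈ s, IsTame (f i)) : IsTame (⋃ i ∈ s, f i) := by
  classical
  induction s using Finset.induction_on with
  | empty => simpa using isTame_const False
  | insert i s _ ih =>
    rw [Finset.set_biUnion_insert]
    exact (h i (s.mem_insert_self i)).union (ih fun j hj => h j (Finset.mem_insert_of_mem hj))

theorem isTame_biInter {ι : Type*} (s : Finset ι) {f : ι → Set ℝ}
    (h : ∀ i ∈ s, IsTame (f i)) : IsTame (⋂ i ∈ s, f i) := by
  classical
  induction s using Finset.induction_on with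
  | empty => simpa using isTame_const True
  | insert i s _ ih =>
    rw [Finset.set_biInter_insert]
    exact (h i (s.mem_insert_self i)).inter (ih fun j hj => h j (Finset.mem_insert_of_mem hj))

theorem IsTame.exists_Ioc (hS : IsTame S) (c : ℝ) :
    ∃ u < c, ∀ x ∈ Ioc u c, x ∈ S ↔ c ∈ S := by
  obtain ⟨P, hP⟩ := eventuallyConst_iff_exists_eventuallyEq.1 (hS c).1
  have hc : (c ∈ S) = P := hP.self_of_nhdsWithin (mem_Iic.2 le_rfl)
  obtain ⟨u, hu, hsub⟩ := mem_nhdsLE_iff_exists_Ioc_subset.1 hP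
  exact ⟨u, hu, fun x hx => by rw [hc]; exact Eq.to_iff (hsub hx)⟩

theorem IsTame.exists_Ioo (hS : IsTame S) (c : ℝ) :
    ∃ v > c, ∀ x ∈ Ioo c v, ∀ y ∈ Ioo c v, x ∈ S ↔ y ∈ S := by
  obtain ⟨P, hP⟩ := eventuallyConst_iff_exists_eventuallyEq.1 (hS c).2
  obtain ⟨v, hv, hsub⟩ := mem_nhdsGT_iff_exists_Ioo_subset.1 hP
  exact ⟨v, hv, fun x hx y hy => (Eq.to_iff (hsub hx)).trans (Eq.to_iff (hsub hy)).symm⟩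

end Tame

section Steps

variable {k : ℕ} {G : Set ℝ} {b c x : ℝ}

theorem ratio_lt_inv_and_sq_lt (hk : 3 ≤ k) (hc : 0 < c) (hG : G ⊆ Ioc c 1) {r : ℕ} (hr : 2 ≤ r)
    (hmem : ∀ j, 1 ≤ j → j ≤ k - 1 → x * (r : ℝ) ^ j ∈ G) : (r : ℝ) < c⁻¹ ∧ c ^ 2 < x := by
  have h₁ := (hG (hmem 1 le_rfl (by omega))).1
  have h₂ := (hG (hmem 2 (by omega) (by omega))).2
  have hr0 : (0 : ℝ) < r := by positivity
  rw [pow_one] at h₁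
  have hrc : r * c < 1 := by nlinarith
  refine ⟨by rw [← one_div, lt_div_iff₀ hc]; exact hrc, ?_⟩
  have hx : 0 < x := pos_of_mul_pos_left (hc.trans h₁) hr0.le
  nlinarith

theorem setOf_kBadWrt_eq (hk : 3 ≤ k) (hc : 0 < c) (hG : G ⊆ Ioc c 1) :
    {x | kBadWrt k G x} =
      ⋃ r ∈ Finset.Icc 2 ⌊c⁻¹⌋₊, ⋂ j ∈ Finset.Icc 1 (k - 1), (· * (r : ℝ) ^ j) ⁻¹' G := by
  ext x
  simp only [mem_ofPred_eq, kBadWrt, mem_iUnion, mem_iInter, mem_preimage, Finset.mem_Icc]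
  constructor
  · rintro ⟨r, hr, hmem⟩
    have hrc := (ratio_lt_inv_and_sq_lt hk hc hG hr hmem).1
    exact ⟨r, ⟨hr, Nat.le_floor hrc.le⟩, fun j hj => hmem j hj.1 hj.2⟩
  · rintro ⟨r, ⟨hr, -⟩, hmem⟩
    exact ⟨r, hr, fun j h₁ h₂ => hmem j ⟨h₁, h₂⟩⟩

theorem isTame_setOf_kBadWrt (hk : 3 ≤ k) (hc : 0 < c) (hG : G ⊆ Ioc c 1) (htame : IsTame G) :
    IsTame {x | kBadWrt k G x} := by
  rw [setOf_kBadWrt_eq hk hc hG]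
  refine isTame_biUnion _ fun r hr => isTame_biInter _ fun j _ => htame.preimage_mul_right ?_
  have : 2 ≤ r := (Finset.mem_Icc.1 hr).1
  positivity

def goodCuts (k : ℕ) (G : Set ℝ) (b : ℝ) : Set ℝ :=
  {t | 0 < t ∧ t < b ∧ kGood k (G ∪ Ioc t b)}

noncomputable def goodInf (k : ℕ) (G : Set ℝ) (b : ℝ) : ℝ :=
  sInf (goodCuts k G b)

theorem div_two_pow_mem_lowerBounds_goodCuts (hb : 0 < b) :
    b / 2 ^ (k - 1) ∈ lowerBounds (goodCuts k G b) := by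
  rintro t ⟨-, -, hgood⟩
  by_contra! ht
  refine hgood ⟨b / 2 ^ (k - 1), 2, by positivity, le_rfl, fun j hj => .inr ⟨?_, ?_⟩⟩
  · exact ht.trans_le (le_mul_of_one_le_right (by positivity) (one_le_pow₀ (by norm_num)))
  · rw [div_mul_eq_mul_div, div_le_iff₀ (by positivity)]
    exact mul_le_mul_of_nonneg_left (pow_le_pow_right₀ (by norm_num) (by omega)) hb.le

section
variable (hk : 3 ≤ k) (hb : 0 < b) (hG : G ⊆ Ioc b 1) (hgood : kGood k G) (htame : IsTame G)
include hk hb hG hgood htame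

theorem goodCuts_nonempty (hnb : ¬ kBadWrt k G b) : (goodCuts k G b).Nonempty := by
  obtain ⟨u, hu, hbad⟩ := (isTame_setOf_kBadWrt hk hb hG htame).exists_Ioc b
  refine ⟨max u (b / 2), by positivity, max_lt hu (by linarith), ?_⟩
  rw [kGood_union_Ioc_iff (by omega) hgood (fun x hx => (hG hx).1) (by positivity)
    (by linarith [le_max_right u (b / 2)])]
  exact fun a ha => mt (hbad a ⟨(le_max_left _ _).trans_lt ha.1, ha.2⟩).1 hnb

theorem goodInf_mem (hnb : ¬ kBadWrt k G b) : goodInf k G b ∈ goodCuts k G b := by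
  obtain ⟨t₀, ht₀⟩ := goodCuts_nonempty hk hb hG hgood htame hnb
  have hbdd : BddBelow (goodCuts k G b) := ⟨_, div_two_pow_mem_lowerBounds_goodCuts hb⟩
  have hcb : goodInf k G b < b := (csInf_le hbdd ht₀).trans_lt ht₀.2.1
  refine ⟨(by positivity : (0 : ℝ) < b / 2 ^ (k - 1)).trans_le
    (le_csInf ⟨t₀, ht₀⟩ (div_two_pow_mem_lowerBounds_goodCuts hb)), hcb, ?_⟩
  -- a progression in `G ∪ (goodInf, b]` already lies in `G ∪ (t, b]` for some cut `t`
  rintro ⟨a, r, ha, hr, hmem⟩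
  have hca : goodInf k G b < a := by
    rcases (by simpa using hmem 0 (by omega) : a ∈ G ∪ Ioc (goodInf k G b) b) with haG | haI
    · exact hcb.trans (hG haG).1
    · exact haI.1
  obtain ⟨t, ⟨-, -, ht⟩, hta⟩ := exists_lt_of_csInf_lt ⟨t₀, ht₀⟩ hca
  refine ht ⟨a, r, ha, hr, fun j hj => (hmem j hj).imp_right fun hI => ⟨?_, hI.2⟩⟩
  exact hta.trans_le (le_mul_of_one_le_right ha.le (one_le_pow₀ (by norm_cast; omega)))

theorem exists_kBadWrt_of_lt_goodInf (hnb : ¬ kBadWrt k G b) {t : ℝ} (ht : t < goodInf k G b) :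
    ∃ x ∈ Ioc t (goodInf k G b), kBadWrt k (G ∪ Ioc (goodInf k G b) b) x := by
  set c := goodInf k G b
  obtain ⟨hc0, hcb, hcgood⟩ := goodInf_mem hk hb hG hgood htame hnb
  set t' := max t (c / 2)
  have ht'c : t' < c := max_lt ht (by linarith)
  have hbdd : BddBelow (goodCuts k G b) := ⟨_, div_two_pow_mem_lowerBounds_goodCuts hb⟩
  have hnot : ¬ kGood k ((G ∪ Ioc c b) ∪ Ioc t' c) := by
    rw [union_assoc, union_comm (Ioc c b), Ioc_union_Ioc_eq_Ioc ht'c.le hcb.le]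
    exact fun h => notMem_of_lt_csInf ht'c hbdd ⟨by positivity, ht'c.trans hcb, h⟩
  have hsub : G ∪ Ioc c b ⊆ Ioi c := union_subset (fun x hx => hcb.trans (hG hx).1) fun x hx => hx.1
  rw [kGood_union_Ioc_iff (by omega) hcgood hsub (by positivity)
    (by linarith [le_max_right t (c / 2)])] at hnot
  push Not at hnot
  obtain ⟨x, hx, hbad⟩ := hnot
  exact ⟨x, ⟨(le_max_left _ _).trans_lt hx.1, hx.2⟩, hbad⟩

end

def nonBadIoc (k : ℕ) (G : Set ℝ) (c : ℝ) : Set ℝ :=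
  {x | x ∈ Ioc 0 c ∧ ¬ kBadWrt k G x}

noncomputable def badSup (k : ℕ) (G : Set ℝ) (c : ℝ) : ℝ :=
  sSup (nonBadIoc k G c)

theorem bddAbove_nonBadIoc : BddAbove (nonBadIoc k G c) := ⟨c, fun _ hx => hx.1.2⟩

theorem kBadWrt_of_mem_Ioc_badSup (hx : x ∈ Ioc (badSup k G c) c) : kBadWrt k G x := by
  have h0 : 0 ≤ badSup k G c := Real.sSup_nonneg fun y hy => hy.1.1.le
  by_contra hnb
  exact notMem_of_csSup_lt hx.1 bddAbove_nonBadIoc ⟨⟨h0.trans_lt hx.1, hx.2⟩, hnb⟩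

section
variable (hk : 3 ≤ k) (hc : 0 < c) (hc1 : c ≤ 1) (hG : G ⊆ Ioc c 1) (htame : IsTame G)
include hk hc hc1 hG htame

theorem isGreatest_badSup : IsGreatest (nonBadIoc k G c) (badSup k G c) := by
  have hsq : c ^ 2 ∈ nonBadIoc k G c :=
    ⟨⟨by positivity, by nlinarith⟩, fun ⟨r, hr, hmem⟩ =>
      (ratio_lt_inv_and_sq_lt hk hc hG hr hmem).2.false⟩
  have hle : ∀ x ∈ nonBadIoc k G c, x ≤ badSup k G c := fun x hx => le_csSup bddAbove_nonBadIoc hx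
  refine ⟨⟨⟨(by positivity : (0 : ℝ) < c ^ 2).trans_le (hle _ hsq),
    csSup_le ⟨_, hsq⟩ fun x hx => hx.1.2⟩, fun hbad => ?_⟩, hle⟩
  -- a bad `badSup` would be bad on a whole left neighbourhood
  obtain ⟨u, hu, hbadu⟩ := (isTame_setOf_kBadWrt hk hc hG htame).exists_Ioc (badSup k G c)
  obtain ⟨x, hx, hux⟩ := exists_lt_of_lt_csSup ⟨_, hsq⟩ hu
  exact hx.2 ((hbadu x ⟨hux, hle x hx⟩).2 hbad)

theorem badSup_lt (hacc : ∀ t < c, ∃ x ∈ Ioc t c, kBadWrt k G x) : badSup k G c < c := by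
  obtain ⟨u, hu, hbadu⟩ := (isTame_setOf_kBadWrt hk hc hG htame).exists_Ioc c
  obtain ⟨x, hx, hbad⟩ := hacc u hu
  have hcbad : kBadWrt k G c := (hbadu x hx).1 hbad
  refine lt_of_le_of_lt (csSup_le (isGreatest_badSup hk hc hc1 hG htame).nonempty
    fun y hy => ?_) hu
  by_contra! hyu
  exact hy.2 ((hbadu y ⟨hyu, hy.1.2⟩).2 hcbad)

end

end Steps

section Blocks

variable (a : ℕ → ℝ)

def blocks (n : ℕ) : Set ℝ := ⋃ i < n, Ioc (a (2 * i + 1)) (a (2 * i))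

def blockUnion : Set ℝ := ⋃ i, Ioc (a (2 * i + 1)) (a (2 * i))

def gapUnion : Set ℝ := ⋃ i, Ioc (a (2 * i + 2)) (a (2 * i + 1))

variable {a}

@[simp]
theorem blocks_zero : blocks a 0 = ∅ := by simp [blocks]

theorem blocks_succ (n : ℕ) :
    blocks a (n + 1) = blocks a n ∪ Ioc (a (2 * n + 1)) (a (2 * n)) :=
  biUnion_lt_succ _ n

theorem blocks_subset_blockUnion (n : ℕ) : blocks a n ⊆ blockUnion a :=
  iUnion₂_subset fun i _ => subset_iUnion (fun i => Ioc (a (2 * i + 1)) (a (2 * i))) i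

theorem blockUnion_inter_Ioi_subset (ha : Antitone a) (n : ℕ) :
    blockUnion a ∩ Ioi (a (2 * n + 2)) ⊆ blocks a (n + 1) := by
  rintro x ⟨hx, hxt⟩
  obtain ⟨i, hi⟩ := mem_iUnion.1 hx
  refine mem_iUnion₂.2 ⟨i, ?_, hi⟩
  by_contra! hni
  exact (hi.2.trans (ha (by omega : 2 * n + 2 ≤ 2 * i))).not_gt hxt

theorem kBadWrt.to_blocks {k : ℕ} {G : Set ℝ} {x : ℝ} (h : kBadWrt k G x) (ha : Antitone a)
    (hG : G ⊆ blockUnion a) (hx : 0 ≤ x) {n : ℕ} (hn : a (2 * n + 2) < 2 * x) :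
    kBadWrt k (blocks a (n + 1)) x :=
  (h.inter_Ici hx).mono fun _ hy =>
    blockUnion_inter_Ioi_subset ha n ⟨hG hy.1, hn.trans_le hy.2⟩

theorem kGood_blockUnion {k : ℕ} (hk : 1 ≤ k) (ha : StrictAnti a)
    (h : ∀ n, kGood k (blocks a n)) : kGood k (blockUnion a) := by
  by_contra hbad
  obtain ⟨x, hx, hx0, hxbad⟩ := (not_kGood_iff hk).1 hbad
  obtain ⟨i, hi⟩ := mem_iUnion.1 hx
  have hlt : a (2 * i + 2) < 2 * x := by linarith [ha (by omega : 2 * i + 1 < 2 * i + 2), hi.1]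
  refine (not_kGood_iff hk).2 ⟨x, ?_, hx0, hxbad.to_blocks ha.antitone subset_rfl hx0.le hlt⟩
    (h (i + 1))
  rw [blocks_succ]
  exact .inr hi

theorem Ioc_diff_blockUnion (ha : StrictAnti a) (hpos : ∀ i, 0 < a i) (h0 : a 0 = 1)
    (hlim : ∀ x > 0, ∃ m, a m < x) : Ioc 0 1 \ blockUnion a = gapUnion a := by
  ext x
  constructor
  · rintro ⟨⟨hx0, hx1⟩, hxG⟩
    obtain ⟨m, hm, hm1⟩ := Nat.exists_not_and_succ_of_not_zero_of_exists (p := (a · < x))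
      (by simpa [h0] using hx1) (hlim x hx0)
    obtain ⟨i, rfl | rfl⟩ := Nat.even_or_odd' m
    · exact (hxG (mem_iUnion.2 ⟨i, hm1, not_lt.1 hm⟩)).elim
    · exact mem_iUnion.2 ⟨i, hm1, not_lt.1 hm⟩
  · intro hx
    obtain ⟨i, hi⟩ := mem_iUnion.1 hx
    refine ⟨⟨(hpos _).trans hi.1, hi.2.trans (h0 ▸ ha.antitone (Nat.zero_le _))⟩, fun hxG => ?_⟩
    obtain ⟨j, hj⟩ := mem_iUnion.1 hxG
    rcases le_or_gt j i with hji | hij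
    · exact (hi.2.trans (ha.antitone (by omega : 2 * j + 1 ≤ 2 * i + 1))).not_gt hj.1
    · exact (hj.2.trans (ha.antitone (by omega : 2 * i + 2 ≤ 2 * j))).not_gt hi.1

end Blocks

section Construction

variable {k : ℕ}

structure StageInv (k : ℕ) (b : ℝ) (G : Set ℝ) : Prop where
  pos : 0 < b
  le_one : b ≤ 1
  subset : G ⊆ Ioc b 1
  good : kGood k G
  not_bad : ¬ kBadWrt k G b
  tame : IsTame G

theorem StageInv.step {b : ℝ} {G : Set ℝ} (hk : 3 ≤ k) (h : StageInv k b G) :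
    let c := goodInf k G b
    let G' := G ∪ Ioc c b
    c < b ∧ badSup k G' c < c ∧ (∀ x ∈ Ioc (badSup k G' c) c, kBadWrt k G' x) ∧
      StageInv k (badSup k G' c) G' := by
  intro c G'
  obtain ⟨hc0, hcb, hgood⟩ := goodInf_mem hk h.pos h.subset h.good h.tame h.not_bad
  have hc1 : c ≤ 1 := hcb.le.trans h.le_one
  have hG' : G' ⊆ Ioc c 1 :=
    union_subset (fun x hx => ⟨hcb.trans (h.subset hx).1, (h.subset hx).2⟩)
      (Ioc_subset_Ioc_right h.le_one)
  have htame : IsTame G' := h.tame.union (isTame_Ioc c b)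
  obtain ⟨⟨⟨hs0, -⟩, hsnb⟩, -⟩ := isGreatest_badSup hk hc0 hc1 hG' htame
  have hsc : badSup k G' c < c := badSup_lt hk hc0 hc1 hG' htame fun t ht =>
    exists_kBadWrt_of_lt_goodInf hk h.pos h.subset h.good h.tame h.not_bad ht
  exact ⟨hcb, hsc, fun x hx => kBadWrt_of_mem_Ioc_badSup hx,
    ⟨hs0, hsc.le.trans hc1, hG'.trans (Ioc_subset_Ioc_left hsc.le), hgood, hsnb, htame⟩⟩

noncomputable def stage (k : ℕ) : ℕ → ℝ × Set ℝ
  | 0 => (1, ∅)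
  | n + 1 =>
    let c := goodInf k (stage k n).2 (stage k n).1
    let G := (stage k n).2 ∪ Ioc c (stage k n).1
    (badSup k G c, G)

noncomputable def goodSeq (k m : ℕ) : ℝ :=
  if Even m then (stage k (m / 2)).1 else goodInf k (stage k (m / 2)).2 (stage k (m / 2)).1

theorem goodSeq_two_mul (k n : ℕ) : goodSeq k (2 * n) = (stage k n).1 := by
  simp [goodSeq]

theorem goodSeq_two_mul_add_one (k n : ℕ) :
    goodSeq k (2 * n + 1) = goodInf k (stage k n).2 (stage k n).1 := by
  have hn : (2 * n + 1) / 2 = n := by omega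
  simp [goodSeq, hn]

theorem stage_snd (k n : ℕ) : (stage k n).2 = blocks (goodSeq k) n := by
  induction n with
  | zero => simp [stage]
  | succ n ih => rw [blocks_succ, ← ih, goodSeq_two_mul_add_one, goodSeq_two_mul]; rfl

theorem goodSeq_zero : goodSeq k 0 = 1 := goodSeq_two_mul k 0

theorem goodSeq_odd (k n : ℕ) :
    goodSeq k (2 * n + 1) = goodInf k (blocks (goodSeq k) n) (goodSeq k (2 * n)) := by
  rw [goodSeq_two_mul_add_one, goodSeq_two_mul, stage_snd]

theorem goodSeq_even_succ (k n : ℕ) :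
    goodSeq k (2 * n + 2) = badSup k (blocks (goodSeq k) (n + 1)) (goodSeq k (2 * n + 1)) := by
  rw [goodSeq_two_mul_add_one, ← stage_snd]
  exact goodSeq_two_mul k (n + 1)

theorem goodSeq_step (hk : 3 ≤ k) (n : ℕ)
    (h : StageInv k (goodSeq k (2 * n)) (blocks (goodSeq k) n)) :
    goodSeq k (2 * n + 1) < goodSeq k (2 * n) ∧ goodSeq k (2 * n + 2) < goodSeq k (2 * n + 1) ∧
      (∀ x ∈ Ioc (goodSeq k (2 * n + 2)) (goodSeq k (2 * n + 1)),
        kBadWrt k (blocks (goodSeq k) (n + 1)) x) ∧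
      StageInv k (goodSeq k (2 * n + 2)) (blocks (goodSeq k) (n + 1)) := by
  rw [goodSeq_even_succ, blocks_succ, goodSeq_odd]
  exact h.step hk

theorem stageInv_goodSeq (hk : 3 ≤ k) :
    ∀ n, StageInv k (goodSeq k (2 * n)) (blocks (goodSeq k) n)
  | 0 => by
    rw [goodSeq_zero, blocks_zero]
    exact ⟨one_pos, le_rfl, empty_subset _, fun ⟨_, _, _, _, h⟩ => h 0 (by omega),
      fun ⟨_, _, h⟩ => h 1 le_rfl (by omega), isTame_const False⟩
  | n + 1 => (goodSeq_step hk n (stageInv_goodSeq hk n)).2.2.2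

theorem goodSeq_strictAnti (hk : 3 ≤ k) : StrictAnti (goodSeq k) := by
  refine strictAnti_nat_of_succ_lt fun m => ?_
  obtain ⟨n, rfl | rfl⟩ := Nat.even_or_odd' m
  · exact (goodSeq_step hk n (stageInv_goodSeq hk n)).1
  · exact (goodSeq_step hk n (stageInv_goodSeq hk n)).2.1

theorem goodSeq_pos (hk : 3 ≤ k) (m : ℕ) : 0 < goodSeq k m := by
  obtain ⟨n, rfl | rfl⟩ := Nat.even_or_odd' m
  · exact (stageInv_goodSeq hk n).pos
  · exact (stageInv_goodSeq hk (n + 1)).pos.trans (goodSeq_strictAnti hk (by omega))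

end Construction

section Solution

variable {k : ℕ}

/-- If the sequence stayed above some `L > 0`, the bad set of a fixed finite stage, which is tame,
would separate the points `goodSeq k (2n+1)` (bad) from `goodSeq k (2n+2)` (not bad) in every right
neighbourhood of `L`. -/
theorem exists_goodSeq_lt (hk : 3 ≤ k) {x : ℝ} (hx : 0 < x) : ∃ m, goodSeq k m < x := by
  by_contra! hxa
  have ha := goodSeq_strictAnti hk
  have hbdd : BddBelow (range (goodSeq k)) := ⟨x, forall_mem_range.2 hxa⟩
  set L := ⨅ m, goodSeq k m
  have hL : ∀ m, L < goodSeq k m := fun m => (ciInf_le hbdd (m + 1)).trans_lt (ha (by omega))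
  have hL0 : 0 < L := hx.trans_le (le_ciInf hxa)
  obtain ⟨p, hp⟩ : ∃ p, goodSeq k p < 2 * L := exists_lt_of_ciInf_lt (by linarith)
  have hinv := stageInv_goodSeq hk (p + 1)
  set S := {y | kBadWrt k (blocks (goodSeq k) (p + 1)) y}
  have hmem : ∀ n, goodSeq k (2 * n + 1) ∈ S := fun n =>
    ((goodSeq_step hk n (stageInv_goodSeq hk n)).2.2.1 _ ⟨ha (by omega), le_rfl⟩).to_blocks
      ha.antitone (blocks_subset_blockUnion _) (hL0.trans (hL _)).le
      (by linarith [ha.antitone (by omega : p ≤ 2 * p + 2), hL (2 * n + 1)])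
  have hnot : ∀ n, goodSeq k (2 * n + 2) ∉ S := fun n hbad =>
    (stageInv_goodSeq hk (n + 1)).not_bad
      (hbad.to_blocks ha.antitone (blocks_subset_blockUnion _) (hL0.trans (hL _)).le
        (by linarith [hL (2 * n + 2)]))
  obtain ⟨v, hv, hSv⟩ := (isTame_setOf_kBadWrt hk hinv.pos hinv.subset hinv.tame).exists_Ioo L
  obtain ⟨m, hm⟩ := exists_lt_of_ciInf_lt hv
  have hm₁ : goodSeq k (2 * m + 1) < v := (ha.antitone (by omega)).trans_lt hm
  have hm₂ : goodSeq k (2 * m + 2) < v := (ha.antitone (by omega)).trans_lt hm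
  exact hnot m ((hSv _ ⟨hL _, hm₁⟩ _ ⟨hL _, hm₂⟩).1 (hmem m))

def IsSolution (k : ℕ) (a : ℕ → ℝ) : Prop :=
  (∀ i, 0 < a i) ∧ StrictAnti a ∧ a 0 = 1 ∧ kGood k (blockUnion a) ∧
    Bad k (blockUnion a) = gapUnion a

theorem isSolution_goodSeq (hk : 3 ≤ k) : IsSolution k (goodSeq k) := by
  have ha := goodSeq_strictAnti hk
  refine ⟨goodSeq_pos hk, ha, goodSeq_zero,
    kGood_blockUnion (by omega) ha fun n => (stageInv_goodSeq hk n).good, ?_⟩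
  have hgap : gapUnion (goodSeq k) ⊆ {x | kBadWrt k (blockUnion (goodSeq k)) x} := fun x hx =>
    let ⟨n, hn⟩ := mem_iUnion.1 hx
    ((goodSeq_step hk n (stageInv_goodSeq hk n)).2.2.1 x hn).mono (blocks_subset_blockUnion _)
  change (Ioc 0 1 \ blockUnion (goodSeq k)) ∩ {x | kBadWrt k (blockUnion (goodSeq k)) x} = _
  rw [Ioc_diff_blockUnion ha (goodSeq_pos hk) goodSeq_zero fun x => exists_goodSeq_lt hk]
  exact inter_eq_left.2 hgap

theorem IsSolution.eq_goodInf {y : ℕ → ℝ} (hk : 3 ≤ k) (hy : IsSolution k y) (n : ℕ) :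
    y (2 * n + 1) = goodInf k (blocks y n) (y (2 * n)) := by
  obtain ⟨hpos, hanti, -, hgood, hbad⟩ := hy
  have hblocks := blocks_succ (a := y) n
  have hgap : y (2 * n + 1) ∈ Bad k (blockUnion y) :=
    hbad ▸ mem_iUnion.2 ⟨n, hanti (by omega), le_rfl⟩
  have htbad : kBadWrt k (blocks y (n + 1)) (y (2 * n + 1)) :=
    hgap.2.to_blocks hanti.antitone subset_rfl (hpos _).le
      (by linarith [hanti (by omega : 2 * n + 1 < 2 * n + 2), hpos (2 * n + 1)])
  rw [hblocks] at htbad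
  show _ = sInf (goodCuts k (blocks y n) (y (2 * n)))
  refine Eq.symm <| IsLeast.csInf_eq ⟨⟨hpos _, hanti (by omega), ?_⟩, ?_⟩
  · exact hgood.mono (hblocks ▸ blocks_subset_blockUnion _)
  · rintro t ⟨-, -, ht⟩
    by_contra! hlt
    refine (not_kGood_iff (by omega)).2 ⟨_, .inr ⟨hlt, (hanti (by omega)).le⟩, hpos _, ?_⟩ ht
    exact htbad.mono (union_subset_union_right _ (Ioc_subset_Ioc_left hlt.le))

theorem IsSolution.eq_badSup {y : ℕ → ℝ} (hk : 3 ≤ k) (hy : IsSolution k y) (n : ℕ) :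
    y (2 * n + 2) = badSup k (blocks y (n + 1)) (y (2 * n + 1)) := by
  obtain ⟨hpos, hanti, -, hgood, hbad⟩ := hy
  show _ = sSup (nonBadIoc k (blocks y (n + 1)) (y (2 * n + 1)))
  refine Eq.symm <| IsGreatest.csSup_eq ⟨⟨⟨hpos _, (hanti (by omega)).le⟩, fun htbad => ?_⟩, ?_⟩
  · have ht : y (2 * n + 2) ∈ blockUnion y := mem_iUnion.2 ⟨n + 1, hanti (by omega), le_rfl⟩
    exact (not_kGood_iff (by omega)).2
      ⟨_, ht, hpos _, htbad.mono (blocks_subset_blockUnion _)⟩ hgood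
  · rintro x ⟨⟨hx0, hxc⟩, hxnb⟩
    by_contra! htx
    have hgap : x ∈ Bad k (blockUnion y) := hbad ▸ mem_iUnion.2 ⟨n, htx, hxc⟩
    exact hxnb (hgap.2.to_blocks hanti.antitone subset_rfl hx0.le (by linarith))

theorem IsSolution.eq_goodSeq {y : ℕ → ℝ} (hk : 3 ≤ k) (hy : IsSolution k y) : y = goodSeq k := by
  have key : ∀ n, y (2 * n) = goodSeq k (2 * n) ∧ blocks y n = blocks (goodSeq k) n := by
    intro n
    induction n with
    | zero => exact ⟨hy.2.2.1.trans goodSeq_zero.symm, by simp⟩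
    | succ n ih =>
      have hodd : y (2 * n + 1) = goodSeq k (2 * n + 1) := by
        rw [hy.eq_goodInf hk, goodSeq_odd, ih.1, ih.2]
      have hblocks : blocks y (n + 1) = blocks (goodSeq k) (n + 1) := by
        rw [blocks_succ, blocks_succ, ih.1, ih.2, hodd]
      refine ⟨?_, hblocks⟩
      rw [show 2 * (n + 1) = 2 * n + 2 by ring, hy.eq_badSup hk, goodSeq_even_succ, hodd, hblocks]
  funext m
  obtain ⟨n, rfl | rfl⟩ := Nat.even_or_odd' m
  · exact (key n).1
  · rw [hy.eq_goodInf hk, goodSeq_odd, (key n).1, (key n).2]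

end Solution

/-- Here `a i` denotes the term `a_{i+1}` of the paper, so that
`G = ⋃_{i ≥ 1} (a_{2i}, a_{2i-1}] = ⋃_{i ≥ 0} (a (2i+1), a (2i)]` and
`Bad G = ⋃_{i ≥ 1} (a_{2i+1}, a_{2i}] = ⋃_{i ≥ 0} (a (2i+2), a (2i+1)]`. -/
theorem stmt_8 (k : ℕ) (hk : 3 ≤ k) :
    ∃! a : ℕ → ℝ,
      (∀ i, 0 < a i) ∧ StrictAnti a ∧ a 0 = 1 ∧
      kGood k (⋃ i : ℕ, Set.Ioc (a (2 * i + 1)) (a (2 * i))) ∧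
      Bad k (⋃ i : ℕ, Set.Ioc (a (2 * i + 1)) (a (2 * i))) =
        ⋃ i : ℕ, Set.Ioc (a (2 * i + 2)) (a (2 * i + 1)) :=
  ⟨goodSeq k, isSolution_goodSeq hk, fun _ hy => IsSolution.eq_goodSeq hk hy⟩
end

section
/- Let k ≥ 3 be an integer and let (a_i)_{i∈ℕ} be a strictly decreasing infinite sequence of positive real numbers such that G = ⋃_{i=1}^{∞} (a_{2i}, a_{2i−1}] is a k-good set and Bad(G) = ⋃_{i=1}^{∞} (a_{2i+1}, a_{2i}]. If there are positive integers A_1 and A_2 with a_1 = 1/A_1 and a_2 = 1/A_2, then there exists a strictly increasing infinite sequence (A_i)_{i∈ℕ} of positive integers such that a_i = 1/A_i for all i ∈ ℕ; moreover, lim_{i→∞} a_i = 0. -/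
/-!
Every endpoint `a n` with `n ≥ 2` equals `a m / d` for an earlier endpoint `a m` and an integer
`d ≥ 2`, so induction from `a 0 = 1 / A₁`, `a 1 = 1 / A₂` makes all endpoints reciprocals of
integers.
A left endpoint `b` of a bad interval is a limit of bad points, and only finitely many ratios `r`
can occur near `b`, so one ratio `r` works along points `x → b⁺`; then each `b * r ^ j` is a
right limit of `G`, hence lies in `G` or is a left endpoint of `G`, and not all of them lie in `G`
since `b ∈ G` and `G` is `k`-good. Dually, a right endpoint `c ∈ Bad G` has some `c * r ^ j` at a
right endpoint of `G`, for otherwise every point slightly above `c` would be a point of `G` that is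
`k`-bad, again contradicting goodness.
-/

open Set Filter Topology

lemma exists_mem_Ioc_succ_of_lt {α : Type*} [LinearOrder α] {a : ℕ → α} {t : α} {N : ℕ}
    (h₀ : t ≤ a 0) (hN : a N < t) : ∃ n, t ∈ Ioc (a (n + 1)) (a n) := by
  classical
  have hex : ∃ n, a (n + 1) < t := by
    cases N with
    | zero => exact absurd h₀ (not_le.2 hN)
    | succ N => exact ⟨N, hN⟩
  refine ⟨Nat.find hex, Nat.find_spec hex, ?_⟩
  cases h : Nat.find hex with
  | zero => exact h₀
  | succ n => exact not_lt.1 (Nat.find_min hex (h ▸ n.lt_succ_self))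

lemma tendsto_mul_const_nhdsGT {α : Type*} [Mul α] [Zero α] [Preorder α] [MulPosStrictMono α]
    [TopologicalSpace α] [ContinuousMul α] {c : α} (hc : 0 < c) (b : α) :
    Tendsto (· * c) (𝓝[>] b) (𝓝[>] (b * c)) :=
  (continuous_mul_const c).continuousWithinAt.tendsto_nhdsWithin
    fun _ hx => mul_lt_mul_of_pos_right hx hc

lemma kGood.not_kBadWrt {k : ℕ} {G : Set ℝ} (hG : kGood k G) {x : ℝ} (hx : x ∈ G) (hx₀ : 0 < x) :
    ¬ kBadWrt k G x := by
  rintro ⟨r, hr, hmem⟩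
  refine hG ⟨x, r, hx₀, hr, fun j hj => ?_⟩
  rcases j.eq_zero_or_pos with rfl | hj₀
  · simpa using hx
  · exact hmem j hj₀ (by omega)

lemma exists_eq_one_div_of_mul_eq {a : ℕ → ℝ}
    (h : ∀ n, (∃ N : ℕ, 0 < N ∧ a n = 1 / N) ∨ ∃ m < n, ∃ d : ℕ, a n * d = a m) (n : ℕ) :
    ∃ N : ℕ, 0 < N ∧ a n = 1 / N := by
  induction n using Nat.strong_induction_on with
  | _ n ih =>
    obtain hn | ⟨m, hmn, d, hd⟩ := h n
    · exact hn
    obtain ⟨N, hN, hm⟩ := ih m hmn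
    have hd₀ : d ≠ 0 := by
      rintro rfl
      rw [Nat.cast_zero, mul_zero, hm] at hd
      exact one_div_ne_zero (Nat.cast_ne_zero.2 hN.ne') hd.symm
    refine ⟨N * d, by positivity, ?_⟩
    rw [hm] at hd
    field_simp at hd ⊢
    push_cast
    linarith

def evenIntervals (a : ℕ → ℝ) : Set ℝ := ⋃ i : ℕ, Ioc (a (2 * i + 1)) (a (2 * i))

def oddIntervals (a : ℕ → ℝ) : Set ℝ := ⋃ i : ℕ, Ioc (a (2 * i + 2)) (a (2 * i + 1))

section Intervals

variable {k : ℕ} {a : ℕ → ℝ}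

lemma mem_evenIntervals_of_mem {i : ℕ} {x : ℝ} (hx : x ∈ Ioc (a (2 * i + 1)) (a (2 * i))) :
    x ∈ evenIntervals a :=
  mem_iUnion.2 ⟨i, hx⟩

lemma kBadWrt_of_mem_oddIntervals (hbad : Bad k (evenIntervals a) = oddIntervals a) {x : ℝ}
    (hx : x ∈ oddIntervals a) : kBadWrt k (evenIntervals a) x :=
  (hbad ▸ hx : x ∈ Bad k (evenIntervals a)).2

lemma notMem_evenIntervals_of_mem_oddIntervals (hbad : Bad k (evenIntervals a) = oddIntervals a)
    {x : ℝ} (hx : x ∈ oddIntervals a) : x ∉ evenIntervals a :=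
  (hbad ▸ hx : x ∈ Bad k (evenIntervals a)).1.2

lemma mem_evenIntervals_or_eq_of_frequently (hdec : StrictAnti a)
    (hbad : Bad k (evenIntervals a) = oddIntervals a) {t : ℝ} {N : ℕ} (hN : a N < t)
    (hfreq : ∃ᶠ y in 𝓝[>] t, y ∈ evenIntervals a) :
    t ∈ evenIntervals a ∨ ∃ m, t = a (2 * m + 1) := by
  have ht₀ : t ≤ a 0 := by
    obtain ⟨y, hy, hty⟩ := (hfreq.and_eventually self_mem_nhdsWithin).exists
    obtain ⟨i, hi⟩ := mem_iUnion.1 hy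
    exact (le_of_lt hty).trans (hi.2.trans (hdec.antitone (Nat.zero_le _)))
  obtain ⟨n, hn⟩ := exists_mem_Ioc_succ_of_lt ht₀ hN
  obtain ⟨m, rfl | rfl⟩ := n.even_or_odd'
  · exact .inl (mem_evenIntervals_of_mem hn)
  rcases hn.2.eq_or_lt with h | h
  · exact .inr ⟨m, h⟩
  obtain ⟨y, hy, hyI⟩ := (hfreq.and_eventually (Ioc_mem_nhdsGT_of_mem ⟨hn.1.le, h⟩)).exists
  exact absurd hy (notMem_evenIntervals_of_mem_oddIntervals hbad (mem_iUnion.2 ⟨m, hyI⟩))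

lemma eventually_mem_evenIntervals {t : ℝ} (ht : t ∈ evenIntervals a) (hne : ∀ m, t ≠ a (2 * m)) :
    ∀ᶠ y in 𝓝[>] t, y ∈ evenIntervals a := by
  obtain ⟨m, hm⟩ := mem_iUnion.1 ht
  filter_upwards [Ioc_mem_nhdsGT_of_mem ⟨hm.1.le, hm.2.lt_of_ne (hne m)⟩] with y hy
  exact mem_evenIntervals_of_mem hy

end Intervals

section Endpoints

variable {k : ℕ} {a : ℕ → ℝ} (hpos : ∀ i, 0 < a i) (hdec : StrictAnti a)
  (hgood : kGood k (evenIntervals a)) (hbad : Bad k (evenIntervals a) = oddIntervals a)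
include hpos hdec hgood hbad

lemma exists_mul_eq_of_even (hk : 2 ≤ k) (i : ℕ) :
    ∃ m, ∃ d : ℕ, 1 < d ∧ a (2 * i + 2) * d = a m := by
  set b := a (2 * i + 2)
  have hb : b ∈ evenIntervals a := mem_iUnion.2 ⟨i + 1, hdec (by omega), le_rfl⟩
  have hbad_near : ∀ᶠ x in 𝓝[>] b, kBadWrt k (evenIntervals a) x := by
    filter_upwards [Ioc_mem_nhdsGT (hdec (by omega : 2 * i + 1 < 2 * i + 2))] with x hx
    exact kBadWrt_of_mem_oddIntervals hbad (mem_iUnion.2 ⟨i, hx⟩)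
  -- only finitely many ratios occur near `b`, since `b * r < x * r ≤ a 0`
  have hratio : ∀ᶠ x in 𝓝[>] b, ∃ r ∈ Finset.Icc 2 ⌊a 0 / b⌋₊,
      ∀ j, 1 ≤ j → j ≤ k - 1 → x * (r : ℝ) ^ j ∈ evenIntervals a := by
    filter_upwards [hbad_near, self_mem_nhdsWithin] with x ⟨r, hr, hmem⟩ (hbx : b < x)
    refine ⟨r, Finset.mem_Icc.2 ⟨hr, Nat.le_floor ?_⟩, hmem⟩
    obtain ⟨n, hn⟩ := mem_iUnion.1 (hmem 1 le_rfl (by omega))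
    have hxr : x * r ≤ a 0 := by
      simpa using hn.2.trans (hdec.antitone (Nat.zero_le _))
    rw [le_div_iff₀ (hpos _)]
    nlinarith [(r.cast_nonneg : (0 : ℝ) ≤ r)]
  obtain ⟨r, hr, hfreq⟩ := (Finset.frequently_exists _).1 hratio.frequently
  have hr : 1 < r := (Finset.mem_Icc.1 hr).1
  by_contra! hne
  refine hgood.not_kBadWrt hb (hpos _) ⟨r, hr, fun j hj hjk => ?_⟩
  have hrj : 1 < r ^ j := Nat.one_lt_pow (by omega) hr
  have hrj' : (1 : ℝ) < (r : ℝ) ^ j := by exact_mod_cast hrj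
  have hlim : ∃ᶠ y in 𝓝[>] (b * (r : ℝ) ^ j), y ∈ evenIntervals a :=
    (tendsto_mul_const_nhdsGT (by positivity) b).frequently (hfreq.mono fun x hx => hx j hj hjk)
  rcases mem_evenIntervals_or_eq_of_frequently hdec hbad
    (lt_mul_of_one_lt_right (hpos _) hrj') hlim with h | ⟨m, hm⟩
  · exact h
  · exact absurd (by push_cast; exact hm) (hne (2 * m + 1) (r ^ j) hrj)

lemma exists_mul_eq_of_odd (i : ℕ) :
    ∃ m, ∃ d : ℕ, 1 < d ∧ a (2 * i + 3) * d = a m := by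
  set c := a (2 * i + 3)
  have hc : c ∈ oddIntervals a := mem_iUnion.2 ⟨i + 1, hdec (by omega), le_rfl⟩
  obtain ⟨r, hr, hmem⟩ := kBadWrt_of_mem_oddIntervals hbad hc
  by_contra! hne
  have hnear : ∀ j ∈ Finset.Icc 1 (k - 1),
      ∀ᶠ x in 𝓝[>] c, x * (r : ℝ) ^ j ∈ evenIntervals a := by
    intro j hj
    obtain ⟨hj, hjk⟩ := Finset.mem_Icc.1 hj
    refine (tendsto_mul_const_nhdsGT (by positivity) c).eventually
      (eventually_mem_evenIntervals (hmem j hj hjk) fun m hm => hne (2 * m) (r ^ j)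
        (Nat.one_lt_pow (by omega) hr) (by push_cast; exact hm))
  obtain ⟨x, hxG, hxbad, hcx⟩ := (Eventually.and
    (Ioc_mem_nhdsGT (hdec (by omega : 2 * i + 2 < 2 * i + 3)))
    (((eventually_all_finset _).2 hnear).and self_mem_nhdsWithin)).exists
  exact hgood.not_kBadWrt (mem_evenIntervals_of_mem (i := i + 1) hxG)
    ((hpos _).trans hcx) ⟨r, hr, fun j hj hjk => hxbad j (Finset.mem_Icc.2 ⟨hj, hjk⟩)⟩

lemma exists_lt_mul_eq (hk : 2 ≤ k) {n : ℕ} (hn : 2 ≤ n) : ∃ m < n, ∃ d : ℕ, a n * d = a m := by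
  have hstep : ∃ m, ∃ d : ℕ, 1 < d ∧ a n * d = a m := by
    obtain ⟨i, rfl | rfl⟩ := n.even_or_odd'
    · obtain ⟨j, rfl⟩ : ∃ j, i = j + 1 := ⟨i - 1, by omega⟩
      exact exists_mul_eq_of_even hpos hdec hgood hbad hk j
    · obtain ⟨j, rfl⟩ : ∃ j, i = j + 1 := ⟨i - 1, by omega⟩
      exact exists_mul_eq_of_odd hpos hdec hgood hbad j
  obtain ⟨m, d, hd, hm⟩ := hstep
  refine ⟨m, hdec.lt_iff_gt.1 (hm ▸ lt_mul_of_one_lt_right (hpos n) (by exact_mod_cast hd)), d, hm⟩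

end Endpoints

/-- Here `a i` denotes the term `a_{i+1}` of the paper, so that
`G = ⋃_{i ≥ 1} (a_{2i}, a_{2i-1}]` and `Bad G = ⋃_{i ≥ 1} (a_{2i+1}, a_{2i}]`. -/
theorem stmt_10 (k : ℕ) (hk : 3 ≤ k) (a : ℕ → ℝ)
    (hpos : ∀ i, 0 < a i) (hdec : StrictAnti a)
    (hgood : kGood k (⋃ i : ℕ, Set.Ioc (a (2 * i + 1)) (a (2 * i))))
    (hbad : Bad k (⋃ i : ℕ, Set.Ioc (a (2 * i + 1)) (a (2 * i))) =
      ⋃ i : ℕ, Set.Ioc (a (2 * i + 2)) (a (2 * i + 1)))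
    (A₁ A₂ : ℕ) (hA₁ : 0 < A₁) (hA₂ : 0 < A₂)
    (ha1 : a 0 = 1 / (A₁ : ℝ)) (ha2 : a 1 = 1 / (A₂ : ℝ)) :
    (∃ A : ℕ → ℕ, (∀ i, 0 < A i) ∧ StrictMono A ∧
      ∀ i, a i = 1 / (A i : ℝ)) ∧
    Filter.Tendsto a Filter.atTop (nhds 0) := by
  have hrecip : ∀ n, ∃ N : ℕ, 0 < N ∧ a n = 1 / N := exists_eq_one_div_of_mul_eq fun n =>
    match n with
    | 0 => .inl ⟨A₁, hA₁, ha1⟩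
    | 1 => .inl ⟨A₂, hA₂, ha2⟩
    | n + 2 => .inr (exists_lt_mul_eq hpos hdec hgood hbad (by omega) le_add_self)
  choose A hA₀ hA using hrecip
  have hA_mono : StrictMono A := fun p q hpq => by
    have h := hdec hpq
    rw [hA, hA, one_div_lt_one_div (by exact_mod_cast hA₀ q) (by exact_mod_cast hA₀ p)] at h
    exact_mod_cast h
  refine ⟨⟨A, hA₀, hA_mono, hA⟩, ?_⟩
  exact (tendsto_one_div_atTop_nhds_zero_nat.comp hA_mono.tendsto_atTop).congr fun n => (hA n).symm
end

section
/- Let k ≥ 3 be an integer. There exists a unique strictly increasing sequence (A_i)_{i=1}^{∞} of positive integers with A_1 = 1 such that G = ⋃_{i=1}^{∞} (1/A_{2i}, 1/A_{2i−1}] is a k-good set and Bad(G) = ⋃_{i=1}^{∞} (1/A_{2i+1}, 1/A_{2i}]. -/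
/-!
Whether `x > 0` lies in either union depends only on `n = ⌊1/x⌋₊`, and
`⌊1/(x r^j)⌋₊ = ⌊n / r^j⌋₊`. So if `S` is the set of `n` with `(1/(n+1), 1/n] ⊆ G`, the two
conditions say exactly that `n ∈ S` iff `n ≥ 1` and no `r ≥ 2` has `⌊n / r^j⌋₊ ∈ S` for all
`1 ≤ j ≤ k - 1`. As `⌊n / r^j⌋₊ < n`, this recursion has exactly one solution `S`, and `A` must
list the points where membership in `S` switches, which makes `A` unique. Such an `A` exists
because `S` and its complement are both infinite: `m 2^(k-1)` is bad with ratio `2`, and if `S`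
were bounded by `N`, then `N²` would be bad with some ratio `r`, where `N²/r ∈ S` and
`N²/r² ∈ S` force `N < r ≤ N`.
-/

open Set

def ofFloorInv (S : Set ℕ) : Set ℝ := {x | 0 < x ∧ ⌊x⁻¹⌋₊ ∈ S}

theorem exists_floor_inv_eq (n : ℕ) : ∃ x : ℝ, 0 < x ∧ ⌊x⁻¹⌋₊ = n := by
  rcases Nat.eq_zero_or_pos n with rfl | hn
  · exact ⟨2, two_pos, Nat.floor_eq_zero.2 (by norm_num)⟩
  · exact ⟨(n : ℝ)⁻¹, by positivity, by rw [inv_inv, Nat.floor_natCast]⟩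

theorem ofFloorInv_injective : Function.Injective ofFloorInv := by
  intro S T h
  ext n
  obtain ⟨x, hx, rfl⟩ := exists_floor_inv_eq n
  simpa [ofFloorInv, hx] using congrArg (x ∈ ·) h

theorem floor_inv_mul_natCast (x : ℝ) (m : ℕ) : ⌊(x * m)⁻¹⌋₊ = ⌊x⁻¹⌋₊ / m := by
  rw [mul_inv, ← div_eq_mul_inv, Nat.floor_div_natCast]

theorem mul_pow_mem_ofFloorInv_iff {S : Set ℕ} {x : ℝ} (hx : 0 < x) {r : ℕ} (hr : 0 < r)
    (j : ℕ) : x * (r : ℝ) ^ j ∈ ofFloorInv S ↔ ⌊x⁻¹⌋₊ / r ^ j ∈ S := by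
  rw [← Nat.cast_pow, ofFloorInv, mem_ofPred_eq, floor_inv_mul_natCast]
  exact and_iff_right (by positivity)

theorem mem_Ioc_one_div_iff {a b : ℕ} (ha : 0 < a) (hb : 0 < b) (x : ℝ) :
    x ∈ Ioc (1 / (b : ℝ)) (1 / a) ↔ 0 < x ∧ a ≤ ⌊x⁻¹⌋₊ ∧ ⌊x⁻¹⌋₊ < b := by
  by_cases hx : 0 < x
  · have hinv : 0 ≤ x⁻¹ := by positivity
    rw [mem_Ioc, Nat.le_floor_iff hinv, Nat.floor_lt hinv, one_div_lt (by positivity) hx,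
      le_one_div hx (by positivity), ← one_div]
    exact ⟨fun h => ⟨hx, h.2, h.1⟩, fun h => ⟨h.2.2, h.2.1⟩⟩
  · refine iff_of_false (fun h => hx ((one_div_pos.2 ?_).trans h.1)) (fun h => hx h.1)
    exact_mod_cast hb

theorem iUnion_Ioc_one_div_eq_ofFloorInv (a b : ℕ → ℕ) (ha : ∀ i, 0 < a i)
    (hb : ∀ i, 0 < b i) :
    ⋃ i, Ioc (1 / (b i : ℝ)) (1 / (a i : ℝ)) = ofFloorInv {n | ∃ i, a i ≤ n ∧ n < b i} := by
  ext x
  simp only [mem_iUnion, mem_Ioc_one_div_iff (ha _) (hb _), ofFloorInv, mem_ofPred_eq,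
    exists_and_left]

def NatBad (k : ℕ) (S : Set ℕ) (n : ℕ) : Prop :=
  ∃ r, 2 ≤ r ∧ ∀ j, 1 ≤ j → j ≤ k - 1 → n / r ^ j ∈ S

theorem kGood_ofFloorInv_iff {k : ℕ} (hk : 0 < k) (S : Set ℕ) :
    kGood k (ofFloorInv S) ↔ ∀ n ∈ S, ¬ NatBad k S n := by
  constructor
  · rintro hgood n hn ⟨r, hr, hbad⟩
    obtain ⟨x, hx, rfl⟩ := exists_floor_inv_eq n
    refine hgood ⟨x, r, hx, hr, fun j hj => ?_⟩
    rw [mul_pow_mem_ofFloorInv_iff hx (by omega)]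
    rcases Nat.eq_zero_or_pos j with rfl | hj0
    · simpa using hn
    · exact hbad j hj0 (by omega)
  · rintro h ⟨x, r, hx, hr, hmem⟩
    simp only [mul_pow_mem_ofFloorInv_iff hx (by omega : 0 < r)] at hmem
    exact h _ (by simpa using hmem 0 hk) ⟨r, hr, fun j _ hjk => hmem j (by omega)⟩

theorem kBadWrt_ofFloorInv_iff {x : ℝ} (hx : 0 < x) (k : ℕ) (S : Set ℕ) :
    kBadWrt k (ofFloorInv S) x ↔ NatBad k S ⌊x⁻¹⌋₊ :=
  exists_congr fun r => and_congr_right fun hr => by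
    simp only [mul_pow_mem_ofFloorInv_iff hx (by omega : 0 < r)]

theorem Bad_ofFloorInv (k : ℕ) (S : Set ℕ) :
    Bad k (ofFloorInv S) = ofFloorInv {n | 0 < n ∧ n ∉ S ∧ NatBad k S n} := by
  ext x
  by_cases hx : 0 < x
  · have hx1 : x ≤ 1 ↔ 0 < ⌊x⁻¹⌋₊ := by rw [Nat.floor_pos, one_le_inv₀ hx]
    simp only [Bad, mem_ofPred_eq, kBadWrt_ofFloorInv_iff hx]
    simp [ofFloorInv, hx, hx1, and_assoc]
  · simp [Bad, ofFloorInv, hx]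

def IsGreedy (k : ℕ) (S : Set ℕ) : Prop :=
  ∀ n, n ∈ S ↔ 0 < n ∧ ¬ NatBad k S n

theorem kGood_ofFloorInv_and_Bad_eq_iff_isGreedy {k : ℕ} (hk : 0 < k) {S : Set ℕ}
    (hS : 0 ∉ S) :
    kGood k (ofFloorInv S) ∧ Bad k (ofFloorInv S) = ofFloorInv {n | 0 < n ∧ n ∉ S} ↔
      IsGreedy k S := by
  rw [kGood_ofFloorInv_iff hk, Bad_ofFloorInv, ofFloorInv_injective.eq_iff, Set.ext_iff]
  simp only [mem_ofPred_eq]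
  constructor
  · rintro ⟨hgood, hbad⟩ n
    by_cases hn : n ∈ S
    · exact iff_of_true hn ⟨Nat.pos_of_ne_zero (by rintro rfl; exact hS hn), hgood n hn⟩
    · exact iff_of_false hn fun ⟨hpos, hnb⟩ => hnb ((hbad n).2 ⟨hpos, hn⟩).2.2
  · intro hG
    refine ⟨fun n hn => ((hG n).1 hn).2, fun n => ⟨fun h => ⟨h.1, h.2.1⟩, ?_⟩⟩
    rintro ⟨hpos, hn⟩
    exact ⟨hpos, hn, not_not.1 fun hnb => hn ((hG n).2 ⟨hpos, hnb⟩)⟩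

theorem natBad_congr {k n : ℕ} {S T : Set ℕ} (hn : 0 < n) (h : ∀ m < n, m ∈ S ↔ m ∈ T) :
    NatBad k S n ↔ NatBad k T n :=
  exists_congr fun _ => and_congr_right fun hr => forall₂_congr fun _ hj =>
    imp_congr_right fun _ => h _ (Nat.div_lt_self hn (Nat.one_lt_pow (by omega) hr))

namespace IsGreedy

variable {k : ℕ} {S : Set ℕ}

theorem unique {T : Set ℕ} (hS : IsGreedy k S) (hT : IsGreedy k T) : S = T := by
  ext n
  induction n using Nat.strong_induction_on with
  | _ n ih => rw [hS, hT]; exact and_congr_right fun hn => not_congr (natBad_congr hn ih)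

theorem zero_notMem (hS : IsGreedy k S) : 0 ∉ S :=
  fun h => lt_irrefl 0 ((hS 0).1 h).1

theorem one_mem (hk : 2 ≤ k) (hS : IsGreedy k S) : 1 ∈ S :=
  (hS 1).2 ⟨one_pos, fun ⟨r, hr, h⟩ =>
    hS.zero_notMem <| by
      simpa [Nat.div_eq_of_lt (show 1 < r by omega)] using h 1 le_rfl (by omega)⟩

theorem exists_ge_notMem (hS : IsGreedy k S) (m : ℕ) : ∃ n ≥ m, n ∉ S := by
  by_contra! h
  have hbad : NatBad k S (m * 2 ^ (k - 1)) := by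
    refine ⟨2, le_rfl, fun j _ hjk => h _ ?_⟩
    rw [ge_iff_le, Nat.le_div_iff_mul_le (by positivity)]
    exact Nat.mul_le_mul_left m (Nat.pow_le_pow_right two_pos hjk)
  exact ((hS _).1 (h _ (Nat.le_mul_of_pos_right m (by positivity)))).2 hbad

theorem exists_ge_mem (hk : 3 ≤ k) (hS : IsGreedy k S) (m : ℕ) : ∃ n ≥ m, n ∈ S := by
  by_contra! h
  set N := m + 1
  have hmN : m < N := Nat.lt_succ_self m
  obtain ⟨r, hr, hdiv⟩ : NatBad k S (N * N) := by
    by_contra hnb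
    exact h (N * N) (by nlinarith) ((hS _).2 ⟨by positivity, hnb⟩)
  have hNr : N < r := by
    have h1 : N * N / r < m :=
      not_le.1 fun hle => h _ hle (by simpa using hdiv 1 le_rfl (by omega))
    rw [Nat.div_lt_iff_lt_mul (by omega)] at h1
    by_contra! hrN
    nlinarith [Nat.mul_le_mul_left m hrN]
  have hrN : r ≤ N := by
    have h2 : 0 < N * N / r ^ 2 := Nat.pos_of_ne_zero fun h0 =>
      hS.zero_notMem (h0 ▸ hdiv 2 (by omega) (by omega))
    rw [Nat.div_pos_iff] at h2
    nlinarith [h2.2]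
  omega

end IsGreedy

-- `∃ _ : 2 ≤ r` rather than `2 ≤ r ∧ _` keeps `2 ≤ r` in context for the termination proof.
def GreedyMem (k n : ℕ) : Prop :=
  if hn : n = 0 then False else
    ¬ ∃ r, ∃ _ : 2 ≤ r, ∀ j, 1 ≤ j → j ≤ k - 1 → GreedyMem k (n / r ^ j)
termination_by n
decreasing_by
  exact Nat.div_lt_self (Nat.pos_of_ne_zero hn) (Nat.one_lt_pow (by omega) (by omega))

theorem exists_isGreedy (k : ℕ) : ∃ S, IsGreedy k S := by
  refine ⟨{n | GreedyMem k n}, fun n => ?_⟩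
  rw [mem_ofPred_eq, GreedyMem]
  rcases Nat.eq_zero_or_pos n with rfl | hn
  · simp
  · simp [hn, hn.ne', NatBad]

def evenBlocks (A : ℕ → ℕ) : Set ℕ := {n | ∃ i, A (2 * i) ≤ n ∧ n < A (2 * i + 1)}

def oddBlocks (A : ℕ → ℕ) : Set ℕ := {n | ∃ i, A (2 * i + 1) ≤ n ∧ n < A (2 * i + 2)}

namespace StrictMono

variable {A : ℕ → ℕ} (hA : StrictMono A)
include hA

theorem exists_mem_Ico {n : ℕ} (hn : A 0 ≤ n) : ∃ i, n ∈ Ico (A i) (A (i + 1)) := by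
  classical
  have hex : ∃ j, n < A j := ⟨n + 1, (hA.id_le (n + 1)).trans_lt' (Nat.lt_succ_self n)⟩
  obtain ⟨i, hi⟩ : ∃ i, Nat.find hex = i + 1 :=
    Nat.exists_eq_add_one.2 (Nat.pos_of_ne_zero fun h => (Nat.find_spec hex).not_ge (h ▸ hn))
  exact ⟨i, not_lt.1 (Nat.find_min hex (by omega)), hi ▸ Nat.find_spec hex⟩

theorem eq_of_mem_Ico {i j n : ℕ} (hi : n ∈ Ico (A i) (A (i + 1)))
    (hj : n ∈ Ico (A j) (A (j + 1))) : i = j := by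
  have := hA.lt_iff_lt.1 (hi.1.trans_lt hj.2)
  have := hA.lt_iff_lt.1 (hj.1.trans_lt hi.2)
  omega

theorem mem_evenBlocks_iff {i n : ℕ} (hi : n ∈ Ico (A i) (A (i + 1))) :
    n ∈ evenBlocks A ↔ Even i := by
  constructor
  · rintro ⟨l, hl⟩
    exact ⟨l, by rw [hA.eq_of_mem_Ico hi hl]; ring⟩
  · rintro ⟨l, rfl⟩
    exact ⟨l, by simpa [two_mul] using hi⟩

theorem mem_oddBlocks_iff {i n : ℕ} (hi : n ∈ Ico (A i) (A (i + 1))) :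
    n ∈ oddBlocks A ↔ Odd i := by
  constructor
  · rintro ⟨l, hl⟩
    exact ⟨l, hA.eq_of_mem_Ico hi hl⟩
  · rintro ⟨l, rfl⟩
    exact ⟨l, hi⟩

theorem zero_notMem_evenBlocks (h0 : 0 < A 0) : 0 ∉ evenBlocks A :=
  fun ⟨_, hi, _⟩ => h0.not_ge ((hA.monotone (Nat.zero_le _)).trans hi)

theorem oddBlocks_eq (h0 : A 0 = 1) : oddBlocks A = {n | 0 < n ∧ n ∉ evenBlocks A} := by
  ext n
  rcases Nat.eq_zero_or_pos n with rfl | hn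
  · refine iff_of_false (fun ⟨_, hi, _⟩ => ?_) (fun h => lt_irrefl 0 h.1)
    exact (hA.monotone (Nat.zero_le _)).not_gt (h0 ▸ hi.trans_lt one_pos)
  · obtain ⟨i, hi⟩ := hA.exists_mem_Ico (n := n) (by omega)
    simp [hA.mem_oddBlocks_iff hi, hA.mem_evenBlocks_iff hi, hn]

theorem le_of_evenBlocks_eq {B : ℕ → ℕ} (hB : StrictMono B) (h : evenBlocks A = evenBlocks B)
    {i : ℕ} (hi : A i = B i) : A (i + 1) ≤ B (i + 1) := by
  by_contra! hlt
  have hmemA : B (i + 1) ∈ Ico (A i) (A (i + 1)) := ⟨hi ▸ (hB (lt_add_one i)).le, hlt⟩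
  have hmemB : B (i + 1) ∈ Ico (B (i + 1)) (B (i + 1 + 1)) := ⟨le_rfl, hB (lt_add_one _)⟩
  have := (hA.mem_evenBlocks_iff hmemA).symm.trans (h ▸ hB.mem_evenBlocks_iff hmemB)
  rw [Nat.even_add_one] at this
  exact iff_not_self this

theorem eq_of_evenBlocks_eq {B : ℕ → ℕ} (hB : StrictMono B) (h0 : A 0 = B 0)
    (h : evenBlocks A = evenBlocks B) : A = B := by
  funext i
  induction i with
  | zero => exact h0
  | succ i ih =>
    exact (hA.le_of_evenBlocks_eq hB h ih).antisymm (hB.le_of_evenBlocks_eq hA h.symm ih.symm)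

end StrictMono

noncomputable def switchPoints (S : Set ℕ) : ℕ → ℕ
  | 0 => 1
  | i + 1 => sInf {n | switchPoints S i < n ∧ (n ∈ S ↔ Even (i + 1))}

section SwitchPoints

variable {S : Set ℕ} (hS : ∀ m, ∃ n ≥ m, n ∈ S) (hSc : ∀ m, ∃ n ≥ m, n ∉ S)
include hS hSc

theorem switchPoints_succ_mem (i : ℕ) :
    switchPoints S (i + 1) ∈ {n | switchPoints S i < n ∧ (n ∈ S ↔ Even (i + 1))} := by
  refine Nat.sInf_mem ?_
  rcases Nat.even_or_odd (i + 1) with he | ho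
  · obtain ⟨n, hn, hnS⟩ := hS (switchPoints S i + 1)
    exact ⟨n, hn, iff_of_true hnS he⟩
  · obtain ⟨n, hn, hnS⟩ := hSc (switchPoints S i + 1)
    exact ⟨n, hn, iff_of_false hnS (Nat.not_even_iff_odd.2 ho)⟩

theorem strictMono_switchPoints : StrictMono (switchPoints S) :=
  strictMono_nat_of_lt_succ fun i => (switchPoints_succ_mem hS hSc i).1

theorem mem_iff_even_of_mem_Ico_switchPoints (h1 : 1 ∈ S) {i n : ℕ}
    (hn : n ∈ Ico (switchPoints S i) (switchPoints S (i + 1))) : n ∈ S ↔ Even i := by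
  rcases hn.1.eq_or_lt with rfl | hlt
  · cases i with
    | zero => exact iff_of_true h1 ⟨0, rfl⟩
    | succ i => exact (switchPoints_succ_mem hS hSc i).2
  · have := Nat.notMem_of_lt_sInf hn.2
    simp only [mem_ofPred_eq, hlt, true_and, Nat.even_add_one] at this
    tauto

theorem evenBlocks_switchPoints (h0 : 0 ∉ S) (h1 : 1 ∈ S) :
    evenBlocks (switchPoints S) = S := by
  have hmono := strictMono_switchPoints hS hSc
  ext n
  rcases Nat.eq_zero_or_pos n with rfl | hn
  · exact iff_of_false (hmono.zero_notMem_evenBlocks one_pos) h0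
  · obtain ⟨i, hi⟩ := hmono.exists_mem_Ico hn
    rw [hmono.mem_evenBlocks_iff hi, mem_iff_even_of_mem_Ico_switchPoints hS hSc h1 hi]

end SwitchPoints

theorem StrictMono.kGood_and_Bad_eq_iff_isGreedy {k : ℕ} (hk : 0 < k) {A : ℕ → ℕ}
    (hA : StrictMono A) (h0 : A 0 = 1) :
    kGood k (⋃ i : ℕ, Ioc (1 / (A (2 * i + 1) : ℝ)) (1 / (A (2 * i) : ℝ))) ∧
      Bad k (⋃ i : ℕ, Ioc (1 / (A (2 * i + 1) : ℝ)) (1 / (A (2 * i) : ℝ))) =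
        ⋃ i : ℕ, Ioc (1 / (A (2 * i + 2) : ℝ)) (1 / (A (2 * i + 1) : ℝ)) ↔
      IsGreedy k (evenBlocks A) := by
  have hpos : ∀ i, 0 < A i := fun i => by have := hA.monotone (Nat.zero_le i); omega
  have hodd : ⋃ i : ℕ, Ioc (1 / (A (2 * i + 2) : ℝ)) (1 / (A (2 * i + 1) : ℝ)) =
      ofFloorInv (oddBlocks A) :=
    iUnion_Ioc_one_div_eq_ofFloorInv _ _ (fun _ => hpos _) (fun _ => hpos _)
  rw [iUnion_Ioc_one_div_eq_ofFloorInv _ _ (fun _ => hpos _) (fun _ => hpos _), hodd,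
    hA.oddBlocks_eq h0]
  exact kGood_ofFloorInv_and_Bad_eq_iff_isGreedy hk (hA.zero_notMem_evenBlocks (h0 ▸ one_pos))

/-- Here `A i` denotes the term `A_{i+1}` of the paper, so that
`G = ⋃_{i ≥ 1} (1/A_{2i}, 1/A_{2i-1}]` and `Bad G = ⋃_{i ≥ 1} (1/A_{2i+1}, 1/A_{2i}]`. -/
theorem stmt_11 (k : ℕ) (hk : 3 ≤ k) :
    ∃! A : ℕ → ℕ,
      (∀ i, 0 < A i) ∧ StrictMono A ∧ A 0 = 1 ∧
      kGood k (⋃ i : ℕ, Set.Ioc (1 / (A (2 * i + 1) : ℝ)) (1 / (A (2 * i) : ℝ))) ∧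
      Bad k (⋃ i : ℕ, Set.Ioc (1 / (A (2 * i + 1) : ℝ)) (1 / (A (2 * i) : ℝ))) =
        ⋃ i : ℕ, Set.Ioc (1 / (A (2 * i + 2) : ℝ)) (1 / (A (2 * i + 1) : ℝ)) := by
  obtain ⟨S, hS⟩ := exists_isGreedy k
  have hmono := strictMono_switchPoints (hS.exists_ge_mem hk) hS.exists_ge_notMem
  have hblocks := evenBlocks_switchPoints (hS.exists_ge_mem hk) hS.exists_ge_notMem
    hS.zero_notMem (hS.one_mem (by omega))
  refine ⟨switchPoints S, ⟨fun i => ?_, hmono, rfl,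
    (hmono.kGood_and_Bad_eq_iff_isGreedy (by omega) rfl).2 (by rwa [hblocks])⟩, ?_⟩
  · exact hmono.monotone (Nat.zero_le i)
  rintro A ⟨-, hA, h0, hconds⟩
  have hgreedy := (hA.kGood_and_Bad_eq_iff_isGreedy (by omega) h0).1 hconds
  exact hA.eq_of_evenBlocks_eq hmono h0 (hgreedy.unique (by rwa [hblocks]))
end

section
/- Let k ≥ 3 be an integer and let (A_i)_{i=1}^{∞} be a strictly increasing sequence of positive integers with A_1 = 1 such that G = ⋃_{i=1}^{∞} (1/A_{2i}, 1/A_{2i−1}] is a k-good set and Bad(G) = ⋃_{i=1}^{∞} (1/A_{2i+1}, 1/A_{2i}]. Then A_2 = 2^{k−1} and A_3 = 2^k. -/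
private lemma two_pow_lt_three_pow {k : ℕ} (hk : 3 ≤ k) : 2 ^ k < 3 ^ (k - 1) := by
  obtain ⟨m, rfl⟩ : ∃ m, k = m + 3 := ⟨k - 3, by omega⟩
  clear hk
  induction m with
  | zero => norm_num
  | succ n ih =>
    have h1 : 2 ^ (n + 1 + 3) = 2 * 2 ^ (n + 3) := by ring
    have h2 : 3 ^ (n + 1 + 3 - 1) = 3 * 3 ^ (n + 3 - 1) := by
      rw [show n + 1 + 3 - 1 = (n + 3 - 1) + 1 by omega]; ring
    rw [h1, h2]
    calc 2 * 2 ^ (n + 3) < 2 * 3 ^ (n + 3 - 1) := by omega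
    _ ≤ 3 * 3 ^ (n + 3 - 1) := Nat.mul_le_mul_right _ (by norm_num)

/-- Here `A i` denotes the term `A_{i+1}` of the paper. -/
theorem stmt_13 (k : ℕ) (hk : 3 ≤ k) (A : ℕ → ℕ)
    (hpos : ∀ i, 0 < A i) (hmono : StrictMono A) (hA1 : A 0 = 1)
    (hgood : kGood k (⋃ i : ℕ, Set.Ioc (1 / (A (2 * i + 1) : ℝ)) (1 / (A (2 * i) : ℝ))))
    (hbad : Bad k (⋃ i : ℕ, Set.Ioc (1 / (A (2 * i + 1) : ℝ)) (1 / (A (2 * i) : ℝ))) =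
      ⋃ i : ℕ, Set.Ioc (1 / (A (2 * i + 2) : ℝ)) (1 / (A (2 * i + 1) : ℝ))) :
    A 1 = 2 ^ (k - 1) ∧ A 2 = 2 ^ k := by
  set G := ⋃ i : ℕ, Set.Ioc (1 / (A (2 * i + 1) : ℝ)) (1 / (A (2 * i) : ℝ)) with hGdef
  have hposR : ∀ i, (0 : ℝ) < (A i : ℝ) := fun i => by exact_mod_cast hpos i
  have honeR : ∀ i, (1 : ℝ) ≤ (A i : ℝ) := fun i => by exact_mod_cast hpos i
  have hA0R : (A 0 : ℝ) = 1 := by rw [hA1]; norm_num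
  have hAmR : ∀ i j, i < j → (A i : ℝ) < (A j : ℝ) := fun i j h => by
    exact_mod_cast hmono h
  have hGsub : G ⊆ Set.Ioc 0 1 := by
    intro x hx
    rw [hGdef, Set.mem_iUnion] at hx
    obtain ⟨i, h1, h2⟩ := hx
    refine ⟨lt_trans (one_div_pos.mpr (hposR _)) h1, h2.trans ?_⟩
    rw [div_le_one (hposR _)]
    exact honeR _
  have hmemG : ∀ (i : ℕ) (x : ℝ), 1 / (A (2 * i + 1) : ℝ) < x → x ≤ 1 / (A (2 * i) : ℝ) →
      x ∈ G := by
    intro i x h1 h2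
    rw [hGdef, Set.mem_iUnion]
    exact ⟨i, h1, h2⟩
  -- Step 1 : 2^(k-1) ≤ A 1
  have h1ge : 2 ^ (k - 1) ≤ A 1 := by
    have hmem : (1 / (A 1 : ℝ)) ∈ Bad k G := by
      rw [hbad, Set.mem_iUnion]
      refine ⟨0, ?_, le_rfl⟩
      show 1 / (A 2 : ℝ) < 1 / (A 1 : ℝ)
      exact one_div_lt_one_div_of_lt (hposR 1) (hAmR 1 2 one_lt_two)
    obtain ⟨-, r, hr2, hrj⟩ := hmem
    have hg := hGsub (hrj (k - 1) (by omega) le_rfl)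
    have hle : (r : ℝ) ^ (k - 1) ≤ (A 1 : ℝ) := by
      have h2 := hg.2
      rw [div_mul_eq_mul_div, one_mul, div_le_one (hposR 1)] at h2
      exact h2
    have hle' : r ^ (k - 1) ≤ A 1 := by exact_mod_cast hle
    have h2r : 2 ^ (k - 1) ≤ r ^ (k - 1) := Nat.pow_le_pow_left hr2 _
    omega
  -- Step 2 : A 1 ≤ 2^(k-1)
  have h1le : A 1 ≤ 2 ^ (k - 1) := by
    by_contra hlt
    push_neg at hlt
    have hltR : (2 : ℝ) ^ (k - 1) < (A 1 : ℝ) := by exact_mod_cast hlt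
    apply hgood
    refine ⟨1 / 2 ^ (k - 1), 2, by positivity, le_rfl, fun j hj => ?_⟩
    have hup : (2 : ℝ) ^ j ≤ 2 ^ (k - 1) := pow_le_pow_right₀ one_le_two (by omega)
    refine hmemG 0 _ ?_ ?_
    · show 1 / (A 1 : ℝ) < _
      push_cast
      calc (1 : ℝ) / A 1 < 1 / 2 ^ (k - 1) :=
            one_div_lt_one_div_of_lt (by positivity) hltR
      _ ≤ 1 / 2 ^ (k - 1) * 2 ^ j :=
            le_mul_of_one_le_right (by positivity) (one_le_pow₀ one_le_two)
    · show _ ≤ 1 / (A 0 : ℝ)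
      rw [hA0R, div_one, div_mul_eq_mul_div, one_mul,
        div_le_one (by positivity : (0:ℝ) < 2 ^ (k - 1))]
      push_cast
      exact hup
  have hA1' : A 1 = 2 ^ (k - 1) := le_antisymm h1le h1ge
  have hA1R : (A 1 : ℝ) = 2 ^ (k - 1) := by exact_mod_cast hA1'
  refine ⟨hA1', ?_⟩
  -- Step 3 : 2^k ≤ A 2
  have h2ge : 2 ^ k ≤ A 2 := by
    by_contra hlt
    push_neg at hlt
    have hltR : (A 2 : ℝ) < 2 ^ k := by exact_mod_cast hlt
    apply hgood
    refine ⟨1 / (A 2 : ℝ), 2, one_div_pos.mpr (hposR 2), le_rfl, fun j hj => ?_⟩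
    rcases Nat.eq_zero_or_pos j with rfl | hj1
    · refine hmemG 1 _ ?_ ?_
      · show 1 / (A 3 : ℝ) < _
        rw [pow_zero, mul_one]
        exact one_div_lt_one_div_of_lt (hposR 2) (hAmR 2 3 (by norm_num))
      · show _ ≤ 1 / (A 2 : ℝ)
        rw [pow_zero, mul_one]
    · refine hmemG 0 _ ?_ ?_
      · show 1 / (A 1 : ℝ) < _
        rw [hA1R, div_mul_eq_mul_div, one_mul,
          div_lt_div_iff₀ (by positivity) (hposR 2)]
        push_cast
        calc (1 : ℝ) * A 2 = A 2 := one_mul _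
        _ < 2 ^ k := hltR
        _ = 2 ^ 1 * 2 ^ (k - 1) := by rw [← pow_add]; congr 1; omega
        _ ≤ 2 ^ j * 2 ^ (k - 1) := by gcongr <;> [norm_num; exact hj1]
      · show _ ≤ 1 / (A 0 : ℝ)
        rw [hA0R, div_one, div_mul_eq_mul_div, one_mul, div_le_one (hposR 2)]
        push_cast
        calc (2 : ℝ) ^ j ≤ 2 ^ (k - 1) := pow_le_pow_right₀ one_le_two (by omega)
        _ = (A 1 : ℝ) := hA1R.symm
        _ ≤ (A 2 : ℝ) := (hAmR 1 2 one_lt_two).le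
  -- Step 4 : A 2 ≤ 2^k
  have h2le : A 2 ≤ 2 ^ k := by
    by_contra hlt
    push_neg at hlt
    have hltR : (2 : ℝ) ^ k < (A 2 : ℝ) := by exact_mod_cast hlt
    have hx : (1 / (2 : ℝ) ^ k) ∈ Bad k G := by
      rw [hbad, Set.mem_iUnion]
      refine ⟨0, ?_, ?_⟩
      · show 1 / (A 2 : ℝ) < _
        exact one_div_lt_one_div_of_lt (by positivity) hltR
      · show _ ≤ 1 / (A 1 : ℝ)
        rw [hA1R]
        exact one_div_le_one_div_of_le (by positivity)
          (pow_le_pow_right₀ one_le_two (by omega))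
    obtain ⟨-, r, hr2, hrj⟩ := hx
    rcases eq_or_lt_of_le hr2 with heq | hr3
    · -- r = 2 : then x * 2 = 1/2^(k-1) lies in the gap, not in G
      have h1 := hrj 1 le_rfl (by omega)
      rw [← heq] at h1
      have hval : 1 / (2 : ℝ) ^ k * ((2 : ℕ) : ℝ) ^ 1 = 1 / 2 ^ (k - 1) := by
        have hkk : (2 : ℝ) ^ k = 2 ^ (k - 1) * 2 := by
          rw [← pow_succ]; congr 1; omega
        push_cast
        rw [pow_one, hkk]
        field_simp
      rw [hval, hGdef, Set.mem_iUnion] at h1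
      obtain ⟨i, hi1, hi2⟩ := h1
      rcases Nat.eq_zero_or_pos i with rfl | hi
      · have : 1 / (A 1 : ℝ) < 1 / 2 ^ (k - 1) := hi1
        rw [hA1R] at this
        exact lt_irrefl _ this
      · have hle2 : (A 2 : ℝ) ≤ (A (2 * i) : ℝ) := by
          exact_mod_cast hmono.le_iff_le.mpr (by omega : 2 ≤ 2 * i)
        have h1' : 1 / (2 : ℝ) ^ (k - 1) ≤ 1 / (A 2 : ℝ) :=
          hi2.trans (one_div_le_one_div_of_le (hposR 2) hle2)
        have h2' : 1 / (A 2 : ℝ) < 1 / (2 : ℝ) ^ k :=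
          one_div_lt_one_div_of_lt (by positivity) hltR
        have h3' : 1 / (2 : ℝ) ^ k ≤ 1 / (2 : ℝ) ^ (k - 1) :=
          one_div_le_one_div_of_le (by positivity)
            (pow_le_pow_right₀ one_le_two (by omega))
        linarith
    · -- r ≥ 3 : then x * r^(k-1) would exceed 1
      have hg := hGsub (hrj (k - 1) (by omega) le_rfl)
      have hle : (r : ℝ) ^ (k - 1) ≤ 2 ^ k := by
        have h2 := hg.2
        rw [div_mul_eq_mul_div, one_mul, div_le_one (by positivity)] at h2
        exact h2
      have hle' : r ^ (k - 1) ≤ 2 ^ k := by exact_mod_cast hle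
      have h3r : 3 ^ (k - 1) ≤ r ^ (k - 1) := Nat.pow_le_pow_left hr3 _
      have := two_pow_lt_three_pow hk
      omega
  exact le_antisymm h2le h2ge
end

section
/- Let k ≥ 3 be an integer such that there is no integral power of 3 strictly between 2^{k−1} and 2^k, and let (A_i)_{i=1}^{∞} be a strictly increasing sequence of positive integers with A_1 = 1 such that G = ⋃_{i=1}^{∞} (1/A_{2i}, 1/A_{2i−1}] is a k-good set and Bad(G) = ⋃_{i=1}^{∞} (1/A_{2i+1}, 1/A_{2i}]. Then A_4 = 3^{k−1}. -/
/-- Here `A i` denotes the term `A_{i+1}` of the paper. -/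
theorem stmt_14 (k : ℕ) (hk : 3 ≤ k)
    (hno3 : ¬ ∃ ℓ : ℕ, 2 ^ (k - 1) < 3 ^ ℓ ∧ 3 ^ ℓ < 2 ^ k)
    (A : ℕ → ℕ)
    (hpos : ∀ i, 0 < A i) (hmono : StrictMono A) (hA1 : A 0 = 1)
    (hgood : kGood k (⋃ i : ℕ, Set.Ioc (1 / (A (2 * i + 1) : ℝ)) (1 / (A (2 * i) : ℝ))))
    (hbad : Bad k (⋃ i : ℕ, Set.Ioc (1 / (A (2 * i + 1) : ℝ)) (1 / (A (2 * i) : ℝ))) =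
      ⋃ i : ℕ, Set.Ioc (1 / (A (2 * i + 2) : ℝ)) (1 / (A (2 * i + 1) : ℝ))) :
    A 3 = 3 ^ (k - 1) := by
  set G : Set ℝ := ⋃ i : ℕ, Set.Ioc (1 / (A (2 * i + 1) : ℝ)) (1 / (A (2 * i) : ℝ)) with hGdef
  obtain ⟨K, rfl⟩ : ∃ K, k = K + 1 := ⟨k - 1, by omega⟩
  simp only [Nat.add_sub_cancel] at hno3 ⊢
  have hK : 2 ≤ K := by omega
  have hposR : ∀ n, (0:ℝ) < (A n : ℝ) := fun n => by exact_mod_cast hpos n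
  have honeN : ∀ n, 1 ≤ A n := fun n => by
    have := hmono.monotone (Nat.zero_le n); omega
  have honeR : ∀ n, (1:ℝ) ≤ (A n : ℝ) := fun n => by exact_mod_cast honeN n
  -- membership helper
  have hmem : ∀ (i : ℕ) (x : ℝ), 1 / (A (2 * i + 1) : ℝ) < x → x ≤ 1 / (A (2 * i) : ℝ) →
      x ∈ G := fun i x h1 h2 => Set.mem_iUnion.mpr ⟨i, h1, h2⟩
  have hGsub : G ⊆ Set.Ioc 0 1 := by
    intro x hx
    obtain ⟨i, h1, h2⟩ := Set.mem_iUnion.mp hx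
    refine ⟨lt_trans (one_div_pos.mpr (hposR _)) h1, h2.trans ?_⟩
    rw [div_le_one (hposR _)]
    exact honeR _
  -- a bad-witnessed element cannot be in G (else goodness fails)
  have hBnotG : ∀ x ∈ G, ¬ kBadWrt (K+1) G x := by
    rintro x hxG ⟨r, hr, hall⟩
    refine hgood ⟨x, r, (hGsub hxG).1, hr, fun j hj => ?_⟩
    rcases Nat.eq_zero_or_pos j with rfl | hj1
    · simpa using hxG
    · exact hall j hj1 (by omega)
  have hBadIff : ∀ x : ℝ, x ∈ Bad (K+1) G ↔ (x ∈ Set.Ioc (0:ℝ) 1 ∧ kBadWrt (K+1) G x) := by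
    intro x
    constructor
    · rintro ⟨⟨hx1, _⟩, hx2⟩; exact ⟨hx1, hx2⟩
    · rintro ⟨hx1, hx2⟩
      exact ⟨⟨hx1, fun hxG => hBnotG x hxG hx2⟩, hx2⟩
  -- elements of Bad are not in G
  have hBadnotG : ∀ x : ℝ, x ∈ Bad (K+1) G → x ∉ G := by
    rintro x ⟨⟨_, hx⟩, _⟩; exact hx
  -- the endpoints 1/A(2i+1) are bad
  have hEndBad : ∀ i : ℕ, (1 / (A (2*i+1) : ℝ)) ∈ Bad (K+1) G := by
    intro i
    rw [hbad]
    refine Set.mem_iUnion.mpr ⟨i, ?_, le_refl _⟩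
    apply one_div_lt_one_div_of_lt (hposR _)
    exact_mod_cast hmono (by omega : 2*i+1 < 2*i+2)
  have hBadIndex : ∀ x : ℝ, x ∈ Bad (K+1) G →
      ∃ i, 1 / (A (2*i+2) : ℝ) < x ∧ x ≤ 1 / (A (2*i+1) : ℝ) := by
    intro x hx
    rw [hbad] at hx
    exact Set.mem_iUnion.mp hx
  -- extracting r^K ≤ c from a term of a bad witness being ≤ 1
  have hrpow : ∀ (c r : ℕ), (1/(c:ℝ)) * (r:ℝ)^K ≤ 1 → 0 < c → r^K ≤ c := by
    intro c r h hc
    have hcR : (0:ℝ) < (c:ℝ) := by exact_mod_cast hc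
    rw [one_div_mul_eq_div, div_le_one hcR] at h
    exact_mod_cast h
  -- parity facts
  have hodd3 : ∀ m : ℕ, 3^m % 2 = 1 := by
    intro m
    have : 3^m % 2 = (3 % 2)^m % 2 := (Nat.pow_mod 3 m 2)
    simpa using this
  have heven : ∀ n : ℕ, 1 ≤ n → 2^n % 2 = 0 := by
    intro n hn
    have : (2:ℕ) ∣ 2^n := dvd_pow_self 2 (by omega)
    omega
  have hne32 : ∀ m : ℕ, 3^m ≠ 2^K := by
    intro m h
    have := hodd3 m
    have := heven K (by omega)
    omega
  have hne32' : ∀ m : ℕ, 3^m ≠ 2^(K+1) := by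
    intro m h
    have := hodd3 m
    have := heven (K+1) (by omega)
    omega
  have hjump : ∀ m : ℕ, 2^K < 3^m → 2^(K+1) ≤ 3^m := by
    intro m h
    by_contra hlt
    exact hno3 ⟨m, h, by omega⟩
  have h3k1 : (2:ℕ)^K < 3^K := Nat.pow_lt_pow_left (by norm_num) (by omega)
  have h32k : (2:ℕ)^(K+1) ≤ 3^K := hjump _ h3k1
  have hpow2R : (2:ℝ)^(K+1) = 2^K * 2 := pow_succ 2 K
  have heq2 : (1/(2:ℝ)^(K+1)) * 2 = 1/(2:ℝ)^K := by
    rw [hpow2R]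
    field_simp
  ---------------------------------------------------------------
  -- Step 1 : A 1 = 2^K
  ---------------------------------------------------------------
  have hA1le : A 1 ≤ 2^K := by
    by_contra hlt
    push_neg at hlt
    have hltR : (2:ℝ)^K < (A 1 : ℝ) := by exact_mod_cast hlt
    apply hgood
    refine ⟨1/(2:ℝ)^K, 2, by positivity, le_refl 2, fun j hj => ?_⟩
    have hj' : j ≤ K := by omega
    apply hmem 0
    · show 1/(A 1 : ℝ) < _
      rw [one_div_mul_eq_div, div_lt_div_iff₀ (hposR 1) (by positivity)]
      push_cast
      calc (1:ℝ) * 2^K = 2^K := by ring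
        _ < A 1 := hltR
        _ ≤ 2^j * A 1 := le_mul_of_one_le_left (le_of_lt (hposR 1)) (one_le_pow₀ (by norm_num))
    · show _ ≤ 1/(A 0 : ℝ)
      rw [one_div_mul_eq_div]
      simp only [hA1, Nat.cast_one, div_one]
      rw [div_le_one (by positivity)]
      push_cast
      exact pow_le_pow_right₀ (by norm_num) hj'
  have hA1ge : 2^K ≤ A 1 := by
    obtain ⟨-, hB⟩ := (hBadIff _).mp (hEndBad 0)
    obtain ⟨r, hr2, hall⟩ := hB
    have hterm := hall K (by omega) (by omega)
    have h1 : (1/(A (2*0+1):ℝ)) * (r:ℝ)^K ≤ 1 := (hGsub hterm).2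
    have h2 : r^K ≤ A 1 := hrpow _ _ (by simpa using h1) (hpos 1)
    calc 2^K ≤ r^K := Nat.pow_le_pow_left hr2 _
      _ ≤ A 1 := h2
  have hA1eq : A 1 = 2^K := le_antisymm hA1le hA1ge
  have hA1R : (A 1 : ℝ) = 2^K := by rw [hA1eq]; push_cast; ring
  ---------------------------------------------------------------
  -- Step 2 : A 2 = 2^(K+1)
  ---------------------------------------------------------------
  have hA12 : A 1 < A 2 := hmono (by omega)
  have hA2ge : 2^(K+1) ≤ A 2 := by
    by_contra hlt
    push_neg at hlt
    have hltR : (A 2 : ℝ) < 2^(K+1) := by exact_mod_cast hlt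
    -- 1/(A 2) is bad via r = 2, but cannot lie in the Bad union
    have hb : (1/(A 2:ℝ)) ∈ Bad (K+1) G := by
      refine (hBadIff _).mpr ⟨⟨one_div_pos.mpr (hposR 2),
        by rw [div_le_one (hposR 2)]; exact honeR 2⟩,
        ⟨2, le_refl 2, fun j hj1 hj2 => ?_⟩⟩
      have hj2' : j ≤ K := by omega
      apply hmem 0
      · show 1/(A 1 : ℝ) < _
        rw [one_div_mul_eq_div, div_lt_div_iff₀ (hposR 1) (hposR 2), hA1R]
        push_cast
        have h2j : (2:ℝ) ≤ 2^j := by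
          calc (2:ℝ) = 2^1 := (pow_one 2).symm
            _ ≤ 2^j := pow_le_pow_right₀ (by norm_num) hj1
        calc (1:ℝ) * (A 2) < 2^(K+1) := by rw [one_mul]; exact hltR
          _ = 2 * 2^K := by rw [hpow2R]; ring
          _ ≤ 2^j * 2^K := mul_le_mul_of_nonneg_right h2j (by positivity)
      · show _ ≤ 1/(A 0 : ℝ)
        rw [one_div_mul_eq_div]
        simp only [hA1, Nat.cast_one, div_one]
        rw [div_le_one (hposR 2)]
        push_cast
        calc (2:ℝ)^j ≤ 2^K := pow_le_pow_right₀ (by norm_num) hj2'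
          _ = (A 1 : ℝ) := hA1R.symm
          _ ≤ (A 2 : ℝ) := by exact_mod_cast le_of_lt hA12
    obtain ⟨i, hi1, hi2⟩ := hBadIndex _ hb
    have hle : A (2*i+1) ≤ A 2 := by
      have := le_of_one_div_le_one_div (hposR 2) hi2
      exact_mod_cast this
    have hlt2 : A 2 < A (2*i+2) := by
      have := lt_of_one_div_lt_one_div (hposR _) hi1
      exact_mod_cast this
    have e1 : 2*i+1 ≤ 2 := hmono.le_iff_le.mp hle
    have e2 : 2 < 2*i+2 := hmono.lt_iff_lt.mp hlt2
    omega
  have hA2le : A 2 ≤ 2^(K+1) := by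
    by_contra hlt
    push_neg at hlt
    have hb : (1/(2:ℝ)^(K+1)) ∈ Bad (K+1) G := by
      rw [hbad]
      refine Set.mem_iUnion.mpr ⟨0, ?_, ?_⟩
      · show 1/(A 2 : ℝ) < _
        apply one_div_lt_one_div_of_lt (by positivity)
        exact_mod_cast hlt
      · show _ ≤ 1/(A (2*0+1) : ℝ)
        simp only [show 2*0+1 = 1 from rfl, hA1R]
        apply one_div_le_one_div_of_le (by positivity)
        exact pow_le_pow_right₀ (by norm_num) (by omega)
    obtain ⟨-, hB⟩ := (hBadIff _).mp hb
    obtain ⟨r, hr2, hall⟩ := hB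
    -- r must be 2
    have hterm := hall K (by omega) (by omega)
    have h1 : (1/(2:ℝ)^(K+1)) * (r:ℝ)^K ≤ 1 := (hGsub hterm).2
    have h2 : r^K ≤ 2^(K+1) := by
      apply hrpow (2^(K+1)) r ?_ (by positivity)
      push_cast
      exact h1
    have hrlt3 : r < 3 := by
      by_contra hr3
      push_neg at hr3
      have h3r : 3^K ≤ r^K := Nat.pow_le_pow_left hr3 _
      have := hne32' K
      omega
    have hr : r = 2 := by omega
    subst hr
    -- the term at j = 1 is 2/2^(K+1) = 1/2^K = 1/(A 1) which is in Bad, not G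
    have hterm1 := hall 1 (le_refl 1) (by omega)
    have heq : (1/(2:ℝ)^(K+1)) * ((2:ℕ):ℝ)^1 = 1/(2:ℝ)^K := by
      push_cast
      rw [pow_one]
      exact heq2
    rw [heq] at hterm1
    have hend := hEndBad 0
    rw [show 2*0+1 = 1 from rfl, hA1R] at hend
    exact hBadnotG _ hend hterm1
  have hA2eq : A 2 = 2^(K+1) := le_antisymm hA2le hA2ge
  have hA2R : (A 2 : ℝ) = 2^(K+1) := by rw [hA2eq]; push_cast; ring
  ---------------------------------------------------------------
  -- Step 3 : A 3 = 3^K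
  ---------------------------------------------------------------
  have hA23 : A 2 < A 3 := hmono (by omega)
  have hA23R : (2:ℝ)^(K+1) < (A 3 : ℝ) := by
    rw [← hA2R]; exact_mod_cast hA23
  -- helper: an element of G that is ≤ 1/2^K must be ≤ 1/2^(K+1)
  have hsmall : ∀ t : ℝ, t ∈ G → t ≤ 1/(2:ℝ)^K → t ≤ 1/(2:ℝ)^(K+1) := by
    intro t htG hle
    by_contra hgt
    push_neg at hgt
    have ht : t ∈ Bad (K+1) G := by
      rw [hbad]
      refine Set.mem_iUnion.mpr ⟨0, ?_, ?_⟩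
      · show 1/(A 2 : ℝ) < t
        rw [hA2R]; exact hgt
      · show t ≤ 1/(A (2*0+1) : ℝ)
        rw [show 2*0+1 = 1 from rfl, hA1R]; exact hle
    exact hBadnotG _ ht htG
  have hA3ge : 3^K ≤ A 3 := by
    by_contra hlt
    push_neg at hlt
    obtain ⟨-, hB⟩ := (hBadIff _).mp (hEndBad 1)
    obtain ⟨r, hr2, hall⟩ := hB
    have hall' : ∀ j : ℕ, 1 ≤ j → j ≤ K → (1/(A 3:ℝ)) * (r:ℝ)^j ∈ G := by
      intro j h1 h2
      have := hall j h1 (by omega)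
      simpa using this
    have hterm := hall' K (by omega) (by omega)
    have h1 : (1/(A 3:ℝ)) * (r:ℝ)^K ≤ 1 := (hGsub hterm).2
    have h2 : r^K ≤ A 3 := hrpow _ _ h1 (hpos 3)
    have hrlt3 : r < 3 := by
      by_contra hr3
      push_neg at hr3
      have h3r : 3^K ≤ r^K := Nat.pow_le_pow_left hr3 _
      omega
    have hr : r = 2 := by omega
    subst hr
    -- all terms stay below 1/2^(K+1)
    have key : ∀ j : ℕ, 1 ≤ j → j ≤ K → (1/(A 3:ℝ)) * ((2:ℕ):ℝ)^j ≤ 1/(2:ℝ)^(K+1) := by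
      intro j
      induction j with
      | zero => omega
      | succ n ih =>
        intro _ hle
        have hstep : (1/(A 3:ℝ)) * ((2:ℕ):ℝ)^(n+1) ≤ 1/(2:ℝ)^K := by
          rcases Nat.eq_zero_or_pos n with rfl | hn
          · -- base case j = 1 : 2/(A 3) ≤ 1/2^K since 2^(K+1) ≤ A 3
            rw [one_div_mul_eq_div, div_le_div_iff₀ (hposR 3) (by positivity)]
            push_cast
            calc (2:ℝ)^(0+1) * 2^K = 2^(K+1) := by rw [hpow2R]; ring
              _ ≤ (A 3 : ℝ) := le_of_lt hA23R
              _ = 1 * (A 3 : ℝ) := by ring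
          · -- inductive step : previous term ≤ 1/2^(K+1), so this one ≤ 1/2^K
            have hprev := ih hn (by omega)
            have hre : (1/(A 3:ℝ)) * ((2:ℕ):ℝ)^(n+1) = ((1/(A 3:ℝ)) * ((2:ℕ):ℝ)^n) * 2 := by
              push_cast; ring
            rw [hre]
            calc ((1/(A 3:ℝ)) * ((2:ℕ):ℝ)^n) * 2 ≤ (1/(2:ℝ)^(K+1)) * 2 := by
                  apply mul_le_mul_of_nonneg_right hprev (by norm_num)
              _ = 1/(2:ℝ)^K := heq2
        have htG : (1/(A 3:ℝ)) * ((2:ℕ):ℝ)^(n+1) ∈ G := hall' (n+1) (by omega) hle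
        exact hsmall _ htG hstep
    have hfin := key K (by omega) (le_refl _)
    -- 1/(A 3) * 2^K ≤ 1/2^(K+1) gives 2^K * 2^(K+1) ≤ A 3
    have h4 : (2:ℝ)^K * (2:ℝ)^(K+1) ≤ (A 3 : ℝ) := by
      rw [one_div_mul_eq_div, div_le_div_iff₀ (hposR 3) (by positivity)] at hfin
      push_cast at hfin
      linarith [hfin]
    have h5 : 2^K * 2^(K+1) ≤ A 3 := by exact_mod_cast h4
    have h6 : A 3 < 4^K := by
      calc A 3 < 3^K := hlt
        _ < 4^K := Nat.pow_lt_pow_left (by norm_num) (by omega)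
    have h7 : (4:ℕ)^K = 2^K * 2^K := by
      rw [show (4:ℕ) = 2*2 from rfl, Nat.mul_pow]
    have h8 : (2:ℕ)^K * 2^K ≤ 2^K * 2^(K+1) := by
      exact Nat.mul_le_mul (le_refl (2^K)) (Nat.pow_le_pow_right (by norm_num) (by omega))
    omega
  have hA3le : A 3 ≤ 3^K := by
    by_contra hlt
    push_neg at hlt
    -- x = 1/3^K is bad via r = 3 but cannot lie in the Bad union
    have hb : (1/(3:ℝ)^K) ∈ Bad (K+1) G := by
      refine (hBadIff _).mpr ⟨⟨by positivity, by
        rw [div_le_one (by positivity)]; exact one_le_pow₀ (by norm_num)⟩,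
        ⟨3, by norm_num, fun j hj1 hj2 => ?_⟩⟩
      have hj2' : j ≤ K := by omega
      set m := K - j with hm
      have hmj : m + j = K := by omega
      have hteq : (1/(3:ℝ)^K) * ((3:ℕ):ℝ)^j = 1/(3:ℝ)^m := by
        push_cast
        rw [one_div_mul_eq_div, div_eq_div_iff (by positivity) (by positivity),
          one_mul, ← pow_add]
        rw [show j + m = K from by omega]
      rw [hteq]
      by_cases hc : 3^m < 2^K
      · apply hmem 0
        · show 1/(A 1 : ℝ) < _
          rw [hA1R]
          apply one_div_lt_one_div_of_lt (by positivity)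
          exact_mod_cast hc
        · show _ ≤ 1/(A 0 : ℝ)
          simp only [hA1, Nat.cast_one, div_one]
          rw [div_le_one (by positivity)]
          exact one_le_pow₀ (by norm_num)
      · push_neg at hc
        have hc' : 2^K < 3^m := lt_of_le_of_ne hc (Ne.symm (hne32 m))
        have hc2 : 2^(K+1) ≤ 3^m := hjump m hc'
        apply hmem 1
        · show 1/(A 3 : ℝ) < 1/(3:ℝ)^m
          apply one_div_lt_one_div_of_lt (by positivity)
          have h3m : (3:ℕ)^m < A 3 := by
            calc (3:ℕ)^m ≤ 3^K := Nat.pow_le_pow_right (by norm_num) (by omega)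
              _ < A 3 := hlt
          exact_mod_cast h3m
        · show 1/(3:ℝ)^m ≤ 1/(A 2 : ℝ)
          rw [hA2R]
          apply one_div_le_one_div_of_le (by positivity)
          exact_mod_cast hc2
    obtain ⟨i, hi1, hi2⟩ := hBadIndex _ hb
    have hle : A (2*i+1) ≤ 3^K := by
      have := le_of_one_div_le_one_div (by positivity : (0:ℝ) < (3:ℝ)^K) hi2
      exact_mod_cast this
    have hlt2 : (3:ℕ)^K < A (2*i+2) := by
      have := lt_of_one_div_lt_one_div (hposR _) hi1
      exact_mod_cast this
    have e1 : 2*i+1 < 3 := hmono.lt_iff_lt.mp (lt_of_le_of_lt hle hlt)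
    have hi0 : i = 0 := by omega
    subst hi0
    rw [show 2*0+2 = 2 from rfl, hA2eq] at hlt2
    omega
  exact le_antisymm hA3le hA3ge
end

section
/- Let k ≥ 3 be an integer and let (A_i)_{i=1}^{∞} be a strictly increasing sequence of positive integers with A_1 = 1 such that, for every positive integer h, the set G_h = ⋃_{i=1}^{h} (1/A_{2i}, 1/A_{2i−1}] ⊆ (0,1] is k-good. Then for every positive integer h, Σ_{i=1}^{h} (1/A_{2i−1} − 1/A_{2i}) ≤ liminf_{n→∞} g_k(n)/n, and consequently Σ_{i=1}^{∞} (1/A_{2i−1} − 1/A_{2i}) ≤ liminf_{n→∞} g_k(n)/n. -/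
/-- `gk k n` is the maximum cardinality of a subset of `{1,...,n}` containing no
geometric progression of length `k` with integer ratio. -/
noncomputable def gk (k n : ℕ) : ℕ :=
  sSup {m | ∃ S : Finset ℕ, S ⊆ Finset.Icc 1 n ∧
    (¬ ∃ a r : ℕ, 0 < a ∧ 2 ≤ r ∧ ∀ j < k, a * r ^ j ∈ S) ∧ S.card = m}

open Filter Finset

def GPFree (k : ℕ) (S : Finset ℕ) : Prop :=
  ¬ ∃ a r : ℕ, 0 < a ∧ 2 ≤ r ∧ ∀ j < k, a * r ^ j ∈ S

lemma gk_le_self (k n : ℕ) : gk k n ≤ n :=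
  csSup_le' fun _ ⟨S, hS, _, hcard⟩ => hcard ▸ (card_le_card hS).trans (by simp)

lemma card_le_gk {k n : ℕ} {S : Finset ℕ} (hS : S ⊆ Icc 1 n) (hfree : GPFree k S) :
    #S ≤ gk k n :=
  le_csSup ⟨n, fun _ ⟨T, hT, _, hcard⟩ => hcard ▸ (card_le_card hT).trans (by simp)⟩
    ⟨S, hS, hfree, rfl⟩

lemma GPFree.of_kGood {k n : ℕ} {G : Set ℝ} (hG : kGood k G) (hn : 0 < n) {S : Finset ℕ}
    (hSG : ∀ m ∈ S, (m : ℝ) / n ∈ G) : GPFree k S := by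
  rintro ⟨a, r, ha, hr, hmem⟩
  refine hG ⟨a / n, r, by positivity, hr, fun j hj => ?_⟩
  simpa [div_mul_eq_mul_div] using hSG _ (hmem j hj)

lemma mem_Ioc_div_iff_div_mem_Ioc {n a b m : ℕ} (hn : 0 < n) (ha : 0 < a) (hb : 0 < b) :
    m ∈ Ioc (n / b) (n / a) ↔ (m : ℝ) / n ∈ Set.Ioc (1 / (b : ℝ)) (1 / (a : ℝ)) := by
  have hn' : (0 : ℝ) < n := by exact_mod_cast hn
  have ha' : (0 : ℝ) < a := by exact_mod_cast ha
  have hb' : (0 : ℝ) < b := by exact_mod_cast hb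
  rw [mem_Ioc, Set.mem_Ioc, Nat.div_lt_iff_lt_mul hb, Nat.le_div_iff_mul_le ha,
    div_lt_div_iff₀ hb' hn', div_le_div_iff₀ hn' ha', one_mul]
  exact_mod_cast Iff.rfl

lemma sub_one_le_cast_div_sub_div (n : ℕ) {a b : ℕ} (ha : 0 < a) (hab : a ≤ b) :
    (n : ℝ) * (1 / a - 1 / b) - 1 ≤ ((n / a - n / b : ℕ) : ℝ) := by
  have hfloor : (n : ℝ) / a - 1 < (n / a : ℕ) := by
    simpa only [Nat.floor_div_eq_div] using Nat.sub_one_lt_floor ((n : ℝ) / a)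
  have hdiv : ((n / b : ℕ) : ℝ) ≤ n / b := Nat.cast_div_le
  rw [Nat.cast_sub (Nat.div_le_div_left hab ha), mul_sub, mul_one_div, mul_one_div]
  linarith

lemma pairwiseDisjoint_Ioc_succ_two_mul {f : ℕ → ℕ} (hf : Antitone f) (s : Set ℕ) :
    s.PairwiseDisjoint fun i => Ioc (f (2 * i + 1)) (f (2 * i)) := by
  rintro i - j - hij
  wlog hlt : i < j generalizing i j
  · exact (this hij.symm (by omega)).symm
  refine disjoint_left.2 fun m hmi hmj => ?_
  have := hf (show 2 * i + 1 ≤ 2 * j by omega)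
  simp only [mem_Ioc] at hmi hmj
  omega

section Blocks

variable {A : ℕ → ℕ}

/-- The integers `m` with `m / n ∈ G_h`. -/
def dilatedBlocks (A : ℕ → ℕ) (h n : ℕ) : Finset ℕ :=
  (range h).biUnion fun i => Ioc (n / A (2 * i + 1)) (n / A (2 * i))

lemma dilatedBlocks_subset_Icc (h n : ℕ) : dilatedBlocks A h n ⊆ Icc 1 n := by
  intro m hm
  simp only [dilatedBlocks, mem_biUnion, mem_Ioc] at hm
  obtain ⟨i, -, hlo, hhi⟩ := hm
  exact mem_Icc.2 ⟨(Nat.zero_le _).trans_lt hlo, hhi.trans (Nat.div_le_self _ _)⟩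

variable (hpos : ∀ i, 0 < A i)
include hpos

lemma div_mem_of_mem_dilatedBlocks {h n m : ℕ} (hn : 0 < n) (hm : m ∈ dilatedBlocks A h n) :
    (m : ℝ) / n ∈ ⋃ i ∈ range h, Set.Ioc (1 / (A (2 * i + 1) : ℝ)) (1 / (A (2 * i) : ℝ)) := by
  obtain ⟨i, hi, hmi⟩ := mem_biUnion.1 hm
  exact Set.mem_biUnion hi ((mem_Ioc_div_iff_div_mem_Ioc hn (hpos _) (hpos _)).1 hmi)

variable (hmono : StrictMono A)
include hmono

lemma one_div_sub_one_div_nonneg (i : ℕ) :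
    0 ≤ 1 / (A (2 * i) : ℝ) - 1 / (A (2 * i + 1) : ℝ) :=
  sub_nonneg.2 <| one_div_le_one_div_of_le (by exact_mod_cast hpos _)
    (by exact_mod_cast hmono.monotone (by omega))

lemma card_dilatedBlocks (h n : ℕ) :
    #(dilatedBlocks A h n) = ∑ i ∈ range h, (n / A (2 * i) - n / A (2 * i + 1)) := by
  have hanti : Antitone fun i => n / A i :=
    fun i _ hij => Nat.div_le_div_left (hmono.monotone hij) (hpos i)
  rw [dilatedBlocks, card_biUnion (pairwiseDisjoint_Ioc_succ_two_mul hanti _)]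
  simp only [Nat.card_Ioc]

lemma mul_sum_sub_le_card_dilatedBlocks (h n : ℕ) :
    (n : ℝ) * ∑ i ∈ range h, (1 / (A (2 * i) : ℝ) - 1 / (A (2 * i + 1) : ℝ)) - h ≤
      #(dilatedBlocks A h n) := by
  rw [card_dilatedBlocks hpos hmono, Nat.cast_sum, mul_sum]
  calc _ = ∑ i ∈ range h, ((n : ℝ) * (1 / (A (2 * i) : ℝ) - 1 / (A (2 * i + 1) : ℝ)) - 1) := by
        simp [sum_sub_distrib]
    _ ≤ _ := sum_le_sum fun i _ =>
        sub_one_le_cast_div_sub_div n (hpos _) (hmono.monotone (by omega))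

lemma sum_sub_div_le_gk_div {k h n : ℕ} (hn : 0 < n)
    (hgood : kGood k (⋃ i ∈ range h, Set.Ioc (1 / (A (2 * i + 1) : ℝ)) (1 / (A (2 * i) : ℝ)))) :
    ∑ i ∈ range h, (1 / (A (2 * i) : ℝ) - 1 / (A (2 * i + 1) : ℝ)) - h / n ≤ gk k n / n := by
  have hn' : (0 : ℝ) < n := by exact_mod_cast hn
  have hfree : GPFree k (dilatedBlocks A h n) :=
    GPFree.of_kGood hgood hn fun _ hm => div_mem_of_mem_dilatedBlocks hpos hn hm
  have hcard : (#(dilatedBlocks A h n) : ℝ) ≤ gk k n :=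
    by exact_mod_cast card_le_gk (dilatedBlocks_subset_Icc h n) hfree
  rw [sub_div' hn'.ne', mul_comm]
  gcongr
  exact (mul_sum_sub_le_card_dilatedBlocks hpos hmono h n).trans hcard

end Blocks

lemma le_liminf_of_sub_div_le {u : ℕ → ℝ} {c C : ℝ} (hu : IsBoundedUnder (· ≤ ·) atTop u)
    (h : ∀ᶠ n in atTop, c - C / n ≤ u n) : c ≤ atTop.liminf u := by
  have ht : Tendsto (fun n : ℕ => c - C / n) atTop (nhds c) := by
    simpa using tendsto_const_nhds.sub (tendsto_const_div_atTop_nhds_zero_nat C)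
  exact ht.liminf_eq ▸ liminf_le_liminf h ht.isBoundedUnder_ge hu.isCoboundedUnder_ge

theorem stmt_16_general (k : ℕ) (A : ℕ → ℕ)
    (hpos : ∀ i, 0 < A i) (hmono : StrictMono A)
    (hgood : ∀ h : ℕ, 0 < h → kGood k
      (⋃ i ∈ Finset.range h, Set.Ioc (1 / (A (2 * i + 1) : ℝ)) (1 / (A (2 * i) : ℝ)))) :
    (∀ h : ℕ, 0 < h →
      ∑ i ∈ Finset.range h, (1 / (A (2 * i) : ℝ) - 1 / (A (2 * i + 1) : ℝ)) ≤
        Filter.atTop.liminf (fun n : ℕ => (gk k n : ℝ) / n)) ∧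
    ∑' i : ℕ, (1 / (A (2 * i) : ℝ) - 1 / (A (2 * i + 1) : ℝ)) ≤
      Filter.atTop.liminf (fun n : ℕ => (gk k n : ℝ) / n) := by
  have hbdd : IsBoundedUnder (· ≤ ·) atTop fun n : ℕ => (gk k n : ℝ) / n :=
    isBoundedUnder_of ⟨1, fun n => div_le_one_of_le₀ (by exact_mod_cast gk_le_self k n)
      n.cast_nonneg⟩
  have hpartial : ∀ h : ℕ, 0 < h →
      ∑ i ∈ range h, (1 / (A (2 * i) : ℝ) - 1 / (A (2 * i + 1) : ℝ)) ≤
        atTop.liminf fun n : ℕ => (gk k n : ℝ) / n := fun h hh =>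
    le_liminf_of_sub_div_le hbdd <| (eventually_gt_atTop 0).mono fun _ hn =>
      sum_sub_div_le_gk_div hpos hmono hn (hgood h hh)
  refine ⟨hpartial, Real.tsum_le_of_sum_range_le (one_div_sub_one_div_nonneg hpos hmono)
    fun h => ?_⟩
  exact (sum_le_sum_of_subset_of_nonneg (range_subset_range.2 h.le_succ)
    fun i _ _ => one_div_sub_one_div_nonneg hpos hmono i).trans (hpartial _ h.succ_pos)

/-- Here `A i` denotes the term `A_{i+1}` of the paper, so that
`G_h = ⋃_{i=1}^{h} (1/A_{2i}, 1/A_{2i-1}]`. -/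
theorem stmt_16 (k : ℕ) (hk : 3 ≤ k) (A : ℕ → ℕ)
    (hpos : ∀ i, 0 < A i) (hmono : StrictMono A) (hA1 : A 0 = 1)
    (hgood : ∀ h : ℕ, 0 < h → kGood k
      (⋃ i ∈ Finset.range h, Set.Ioc (1 / (A (2 * i + 1) : ℝ)) (1 / (A (2 * i) : ℝ)))) :
    (∀ h : ℕ, 0 < h →
      ∑ i ∈ Finset.range h, (1 / (A (2 * i) : ℝ) - 1 / (A (2 * i + 1) : ℝ)) ≤
        Filter.atTop.liminf (fun n : ℕ => (gk k n : ℝ) / n)) ∧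
    ∑' i : ℕ, (1 / (A (2 * i) : ℝ) - 1 / (A (2 * i + 1) : ℝ)) ≤
      Filter.atTop.liminf (fun n : ℕ => (gk k n : ℝ) / n) :=
  stmt_16_general k A hpos hmono hgood
end
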